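/- arXiv:1712.02302 — 11 statements merged into one kernel-verified Lean document; each statement's English description precedes it below -/
import Mathlib

section
/- Let D be a finite-dimensional algebra over a field, and let A, B, C be linear subspaces of D with A·B ⊆ C. Then the slice rank of the multiplication tensor of D is at most codim A + codim B + dim C. -/
/-!
Choose complements `A'` of `A` and `B'` of `B` and split `x = a + a'`, `y = b + b'`. Then
`x y = a' y + a b' + a b`. The first term is linear in `a' ∈ A'`, so it is a sum of
`dim A'` slices in the first index; the second likewise gives `dim B'` slices in the second
index; the third lies in `A·B ⊆ C`, so expanding it in a basis of `C` gives `dim C` slices in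
the third index.
-/

/-- `HasSliceRankLE K F r` : the tensor `F` can be written as a sum of `r` slice terms. -/
def HasSliceRankLE {X Y Z : Type*} (K : Type*) [Field K]
    (F : X → Y → Z → K) (r : ℕ) : Prop :=
  ∃ T : Fin r → (X → Y → Z → K),
    (∀ i, (∃ (f : X → K) (g : Y → Z → K), T i = fun x y z => f x * g y z) ∨
          (∃ (f : Y → K) (g : X → Z → K), T i = fun x y z => f y * g x z) ∨
          (∃ (f : Z → K) (g : X → Y → K), T i = fun x y z => f z * g x y)) ∧
    ∀ x y z, F x y z = ∑ i, T i x y z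

/-- The slice rank of a 3-tensor. -/
noncomputable def sliceRank {X Y Z : Type*} (K : Type*) [Field K]
    (F : X → Y → Z → K) : ℕ :=
  sInf {r | HasSliceRankLE K F r}

open Module

theorem Module.Basis.dual_apply_eq_sum {R M ι : Type*} [CommRing R] [AddCommGroup M] [Module R M]
    [Fintype ι] (b : Basis ι R M) (f : Dual R M) (m : M) :
    f m = ∑ i, b.repr m i * f (b i) := by
  nth_rw 1 [← b.sum_dual_apply_smul_coord f]
  simp only [LinearMap.sum_apply, LinearMap.smul_apply, Basis.coord_apply, smul_eq_mul, mul_comm]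

namespace HasSliceRankLE

variable {X Y Z K : Type*} [Field K]

theorem sliceRank_le {F : X → Y → Z → K} {r : ℕ} (hF : HasSliceRankLE K F r) :
    sliceRank K F ≤ r :=
  Nat.sInf_le hF

theorem add {F G : X → Y → Z → K} {r s : ℕ} (hF : HasSliceRankLE K F r)
    (hG : HasSliceRankLE K G s) : HasSliceRankLE K (F + G) (r + s) := by
  obtain ⟨T, hT, hFT⟩ := hF
  obtain ⟨S, hS, hGS⟩ := hG
  refine ⟨fun i => Sum.elim T S (finSumFinEquiv.symm i), fun i => ?_, fun x y z => ?_⟩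
  · dsimp only
    rcases finSumFinEquiv.symm i with j | j
    exacts [hT j, hS j]
  · rw [← finSumFinEquiv.sum_comp, Fintype.sum_sum_type]
    simp [hFT, hGS]

variable {V : Type*} [AddCommGroup V] [Module K V] [FiniteDimensional K V]

theorem of_dual_left (α : X → V) (φ : Y → Z → Dual K V) :
    HasSliceRankLE K (fun x y z => φ y z (α x)) (finrank K V) :=
  ⟨fun u x y z => (finBasis K V).repr (α x) u * φ y z (finBasis K V u),
    fun _ => Or.inl ⟨_, _, rfl⟩, fun _ _ _ => (finBasis K V).dual_apply_eq_sum _ _⟩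

theorem of_dual_middle (β : Y → V) (φ : X → Z → Dual K V) :
    HasSliceRankLE K (fun x y z => φ x z (β y)) (finrank K V) :=
  ⟨fun u x y z => (finBasis K V).repr (β y) u * φ x z (finBasis K V u),
    fun _ => Or.inr <| Or.inl ⟨_, _, rfl⟩, fun _ _ _ => (finBasis K V).dual_apply_eq_sum _ _⟩

theorem of_dual_right (γ : X → Y → V) (φ : Z → Dual K V) :
    HasSliceRankLE K (fun x y z => φ z (γ x y)) (finrank K V) := by
  refine ⟨fun u x y z => φ z (finBasis K V u) * (finBasis K V).repr (γ x y) u,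
    fun _ => Or.inr <| Or.inr ⟨_, _, rfl⟩, fun x y z => ?_⟩
  dsimp only
  rw [(finBasis K V).dual_apply_eq_sum (φ z)]
  simp_rw [mul_comm]

end HasSliceRankLE

section Bilinear

variable {K U V W X Y Z : Type*} [Field K]
  [AddCommGroup U] [Module K U] [FiniteDimensional K U]
  [AddCommGroup V] [Module K V] [FiniteDimensional K V]
  [AddCommGroup W] [Module K W] [FiniteDimensional K W]

theorem hasSliceRankLE_of_map₂_le (μ : U →ₗ[K] V →ₗ[K] W) (x : X → U) (y : Y → V)
    (ℓ : Z → Dual K W) {A : Submodule K U} {B : Submodule K V} {C : Submodule K W}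
    (hABC : Submodule.map₂ μ A B ≤ C) :
    HasSliceRankLE K (fun i j k => ℓ k (μ (x i) (y j)))
      (finrank K U - finrank K A + (finrank K V - finrank K B) + finrank K C) := by
  obtain ⟨A', hA⟩ := A.exists_isCompl
  obtain ⟨B', hB⟩ := B.exists_isCompl
  set p := A.projectionOnto A' hA
  set p' := A'.projectionOnto A hA.symm
  set q := B.projectionOnto B' hB
  set q' := B'.projectionOnto B hB.symm
  have hsplit (u : U) (v : V) : μ u v = μ (p' u) v + μ (p u) (q' v) + μ (p u) (q v) := by
    have hu : (p u : U) + p' u = u := Submodule.projection_add_projection_eq_self hA u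
    have hv : (q v : V) + q' v = v := Submodule.projection_add_projection_eq_self hB v
    calc μ u v = μ (p u + p' u) (q v + q' v) := by rw [hu, hv]
      _ = μ (p' u) (q v + q' v) + μ (p u) (q' v) + μ (p u) (q v) := by
        simp only [map_add, LinearMap.add_apply]
        abel
      _ = μ (p' u) v + μ (p u) (q' v) + μ (p u) (q v) := by rw [hv]
  have h₁ := HasSliceRankLE.of_dual_left (fun i => p' (x i))
    (fun j k => ℓ k ∘ₗ μ.flip (y j) ∘ₗ A'.subtype)
  have h₂ := HasSliceRankLE.of_dual_middle (fun j => q' (y j))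
    (fun i k => ℓ k ∘ₗ μ (p (x i)) ∘ₗ B'.subtype)
  have h₃ := HasSliceRankLE.of_dual_right
    (fun i j => (⟨μ (p (x i)) (q (y j)), hABC (Submodule.apply_mem_map₂ μ (p _).2 (q _).2)⟩ : C))
    (fun k => ℓ k ∘ₗ C.subtype)
  have hA' := Submodule.finrank_add_eq_of_isCompl hA
  have hB' := Submodule.finrank_add_eq_of_isCompl hB
  convert (h₁.add h₂).add h₃ using 1
  · funext i j k
    rw [hsplit, map_add, map_add]
    rfl
  · omega

end Bilinear

open Module in
theorem sliceRank_mul_tensor_le_of_mul_subset_general {K : Type*} [Field K]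
    {D : Type*} [Ring D] [Algebra K D] [FiniteDimensional K D]
    {ι : Type*} (b : Basis ι K D)
    (A B C : Submodule K D) (h : ∀ a ∈ A, ∀ x ∈ B, a * x ∈ C) :
    sliceRank K (fun i j k : ι => b.repr (b i * b j) k) ≤
      (finrank K D - finrank K A) + (finrank K D - finrank K B) + finrank K C :=
  (hasSliceRankLE_of_map₂_le (LinearMap.mul K D) b b b.coord (Submodule.map₂_le.mpr h)).sliceRank_le

open Module in
/-- If `A·B ⊆ C` for subspaces of a finite-dimensional algebra `D`, then the
slice rank of the multiplication tensor of `D` (in any basis) is at most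
`codim A + codim B + dim C`. -/
theorem sliceRank_mul_tensor_le_of_mul_subset {K : Type*} [Field K]
    {D : Type*} [Ring D] [Algebra K D] [FiniteDimensional K D]
    {ι : Type*} [Fintype ι] (b : Basis ι K D)
    (A B C : Submodule K D) (h : ∀ a ∈ A, ∀ x ∈ B, a * x ∈ C) :
    sliceRank K (fun i j k : ι => b.repr (b i * b j) k) ≤
      (finrank K D - finrank K A) + (finrank K D - finrank K B) + finrank K C :=
  sliceRank_mul_tensor_le_of_mul_subset_general b A B C h
end

section
/- Let G be a finite group, F a field, and I a two-sided ideal in the group algebra F[G]. Then for all natural numbers a, b, the slice rank of the multiplication tensor of F[G] is at most codim I^a + codim I^b + dim I^{a+b}. -/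
/-!
Write `δ g` for the basis element of `g`, so that the tensor is `(g, h, k) ↦ (δ g * δ h)(k)`.
Split `δ g = u g + v g` along `I^a ⊕ A'` and `δ h = p h + q h` along `I^b ⊕ B'`. Then
`δ g * δ h = v g * δ h + u g * q h + u g * p h`: the first term factors through `A'` in `g`,
the second through `B'` in `h`, and the third lies in `I^a * I^b ⊆ I^(a+b)`, so each is a sum of
at most `dim A'`, `dim B'`, resp. `dim I^(a+b)` slices.
-/

open Module

section SliceRank

variable {X Y Z K : Type*} [Field K]

theorem HasSliceRankLE.add_s2 {F F' : X → Y → Z → K} {r s : ℕ}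
    (h : HasSliceRankLE K F r) (h' : HasSliceRankLE K F' s) :
    HasSliceRankLE K (fun x y z => F x y z + F' x y z) (r + s) := by
  obtain ⟨T, hT, hTF⟩ := h
  obtain ⟨T', hT', hTF'⟩ := h'
  refine ⟨Fin.append T T', fun i => ?_, fun x y z => ?_⟩
  · induction i using Fin.addCases with
    | left i => simpa using hT i
    | right j => simpa using hT' j
  · simp [Fin.sum_univ_add, hTF, hTF']

theorem sliceRank_le {F : X → Y → Z → K} {r : ℕ} (h : HasSliceRankLE K F r) :
    sliceRank K F ≤ r :=
  Nat.sInf_le h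

variable {W : Type*} [AddCommGroup W] [Module K W] [FiniteDimensional K W]

theorem hasSliceRankLE_finrank_of_left (f : X → W) (Φ : W →ₗ[K] Y → Z → K) :
    HasSliceRankLE K (fun x y z => Φ (f x) y z) (finrank K W) := by
  let b := finBasis K W
  refine ⟨fun i x y z => b.repr (f x) i * Φ (b i) y z, fun i => Or.inl ⟨_, _, rfl⟩,
    fun x y z => ?_⟩
  conv_lhs => dsimp only; rw [← b.sum_repr (f x)]
  simp only [map_sum, map_smul, Finset.sum_apply, Pi.smul_apply, smul_eq_mul]

theorem hasSliceRankLE_finrank_of_middle (f : Y → W) (Φ : W →ₗ[K] X → Z → K) :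
    HasSliceRankLE K (fun x y z => Φ (f y) x z) (finrank K W) := by
  let b := finBasis K W
  refine ⟨fun i x y z => b.repr (f y) i * Φ (b i) x z, fun i => Or.inr (Or.inl ⟨_, _, rfl⟩),
    fun x y z => ?_⟩
  conv_lhs => dsimp only; rw [← b.sum_repr (f y)]
  simp only [map_sum, map_smul, Finset.sum_apply, Pi.smul_apply, smul_eq_mul]

theorem hasSliceRankLE_finrank_of_right (f : X → Y → W) (Φ : W →ₗ[K] Z → K) :
    HasSliceRankLE K (fun x y z => Φ (f x y) z) (finrank K W) := by
  let b := finBasis K W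
  refine ⟨fun i x y z => Φ (b i) z * b.repr (f x y) i, fun i => Or.inr (Or.inr ⟨_, _, rfl⟩),
    fun x y z => ?_⟩
  conv_lhs => dsimp only; rw [← b.sum_repr (f x y)]
  simp only [map_sum, map_smul, Finset.sum_apply, Pi.smul_apply, smul_eq_mul, mul_comm]

end SliceRank

theorem hasSliceRankLE_mul_of_mul_le {X Y Z K R : Type*} [Field K] [Ring R] [Algebra K R]
    [FiniteDimensional K R] {A B C : Submodule K R} (hABC : A * B ≤ C)
    (e : X → R) (e' : Y → R) (φ : R →ₗ[K] Z → K) :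
    HasSliceRankLE K (fun x y z => φ (e x * e' y) z)
      (finrank K R - finrank K A + (finrank K R - finrank K B) + finrank K C) := by
  obtain ⟨A', hA⟩ := A.exists_isCompl
  obtain ⟨B', hB⟩ := B.exists_isCompl
  let u x := A.projection A' hA (e x)
  have hsplit : ∀ x y, e x * e' y = A'.projection A hA.symm (e x) * e' y
      + u x * B'.projection B hB.symm (e' y) + u x * B.projection B' hB (e' y) := by
    intro x y
    have key : ∀ u v p q : R, (u + v) * (p + q) = v * (p + q) + u * q + u * p := by
      intros; noncomm_ring
    simpa only [Submodule.projection_add_projection_eq_self] using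
      key (A.projection A' hA (e x)) (A'.projection A hA.symm (e x)) (B.projection B' hB (e' y))
        (B'.projection B hB.symm (e' y))
  have hslices := ((hasSliceRankLE_finrank_of_left (A'.projectionOnto A hA.symm ∘ e)
      (LinearMap.pi fun y => φ ∘ₗ LinearMap.mulRight K (e' y) ∘ₗ A'.subtype)).add_s2
    (hasSliceRankLE_finrank_of_middle (B'.projectionOnto B hB.symm ∘ e')
      (LinearMap.pi fun x => φ ∘ₗ LinearMap.mulLeft K (u x) ∘ₗ B'.subtype))).add_s2
    (hasSliceRankLE_finrank_of_right
      (fun x y => (⟨u x * B.projection B' hB (e' y), hABC (Submodule.mul_mem_mul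
        (Submodule.projection_apply_mem _ _) (Submodule.projection_apply_mem _ _))⟩ : C))
      (φ ∘ₗ C.subtype))
  have hA' := Submodule.finrank_add_eq_of_isCompl hA
  have hB' := Submodule.finrank_add_eq_of_isCompl hB
  convert hslices using 1
  · funext x y z
    simp [hsplit, u]
  · omega

open Module in
/-- For a two-sided ideal `I` of the group algebra `F[G]` of a finite group,
the slice rank of the multiplication tensor of `F[G]` (in the group-element
basis, where it is the multiplication tensor of `G`) is at most
`codim I^a + codim I^b + dim I^(a+b)`. -/
theorem sliceRank_group_le_codim_add_codim_add_dim {K : Type*} [Field K]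
    {G : Type*} [Group G] [Fintype G] [DecidableEq G]
    (I : Ideal (MonoidAlgebra K G)) (hI : ∀ x ∈ I, ∀ r : MonoidAlgebra K G, x * r ∈ I)
    (a b : ℕ) :
    sliceRank K (fun g h k : G => if g * h = k then (1 : K) else 0) ≤
      (Fintype.card G - finrank K (Submodule.restrictScalars K (I ^ a))) +
      (Fintype.card G - finrank K (Submodule.restrictScalars K (I ^ b))) +
      finrank K (Submodule.restrictScalars K (I ^ (a + b))) := by
  have : I.IsTwoSided := ⟨fun r hx => hI _ hx r⟩
  have hmul : (I ^ a).restrictScalars K * (I ^ b).restrictScalars K ≤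
      (I ^ (a + b)).restrictScalars K := Submodule.mul_le.mpr fun x hx y hy => by
    rw [Submodule.restrictScalars_mem, Ideal.IsTwoSided.pow_add]
    exact Submodule.mul_mem_mul hx hy
  let coeff : MonoidAlgebra K G →ₗ[K] G → K :=
    Finsupp.lcoeFun ∘ₗ (MonoidAlgebra.coeffLinearEquiv K).toLinearMap
  have htensor : (fun g h k : G => if g * h = k then (1 : K) else 0) =
      fun g h k => coeff (MonoidAlgebra.single g 1 * MonoidAlgebra.single h 1) k := by
    funext g h k
    simp [coeff, MonoidAlgebra.single_mul_single, Finsupp.single_apply]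
  have hdim : finrank K (MonoidAlgebra K G) = Fintype.card G :=
    (MonoidAlgebra.coeffLinearEquiv K).finrank_eq.trans (finrank_finsupp_self K)
  rw [htensor, ← hdim]
  exact sliceRank_le (hasSliceRankLE_mul_of_mul_le hmul _ _ coeff)
end

section
/- If a finite group G contains a multiplicative matching of cardinality m, then the slice rank of the multiplication tensor of G over any field is at least m. -/
/-!
Restricting the multiplication tensor along `s`, `t` and `k ↦ (u k)⁻¹` yields the diagonal tensor
on `Fin m`, and restriction cannot increase slice rank; so it suffices that the diagonal tensor
on `ι` has slice rank at least `|ι|`. Take a decomposition into `r` slices, `c` of which are slices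
in the third variable, `f z * g x y`. The vectors `h` orthogonal to all these `f` form a space of
dimension at least `|ι| - c`, and such a space contains a vector `h` with at least `|ι| - c`
nonzero coordinates. Contracting the third variable against `h` kills the `c` slices in the third
variable and turns each of the other `r - c` slices into a matrix of rank at most one, while the
diagonal tensor becomes `diagonal h`, of rank at least `|ι| - c`. Hence `|ι| - c ≤ r - c`.
-/

open Module Finset Matrix

section SliceRank

variable {K : Type*} [Field K] {X Y Z : Type*}

theorem HasSliceRankLE.comp {X' Y' Z' : Type*} {F : X → Y → Z → K} {r : ℕ}
    (hF : HasSliceRankLE K F r) (a : X' → X) (b : Y' → Y) (c : Z' → Z) :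
    HasSliceRankLE K (fun x y z => F (a x) (b y) (c z)) r := by
  obtain ⟨T, hslice, hsum⟩ := hF
  refine ⟨fun i x y z => T i (a x) (b y) (c z), fun i => ?_, fun x y z => hsum _ _ _⟩
  rcases hslice i with ⟨f, g, hT⟩ | ⟨f, g, hT⟩ | ⟨f, g, hT⟩
  · exact Or.inl ⟨f ∘ a, fun y z => g (b y) (c z), by simp only [hT]; rfl⟩
  · exact Or.inr <| Or.inl ⟨f ∘ b, fun x z => g (a x) (c z), by simp only [hT]; rfl⟩
  · exact Or.inr <| Or.inr ⟨f ∘ c, fun x y => g (a x) (b y), by simp only [hT]; rfl⟩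

theorem hasSliceRankLE_card_left [Fintype X] (F : X → Y → Z → K) :
    HasSliceRankLE K F (Fintype.card X) := by
  classical
  let e := (Fintype.equivFin X).symm
  refine ⟨fun i x y z => (if x = e i then 1 else 0) * F (e i) y z,
    fun i => Or.inl ⟨_, _, rfl⟩, fun x y z => ?_⟩
  rw [e.sum_comp (fun a => (if x = a then 1 else 0) * F a y z)]
  simp

theorem le_sliceRank [Fintype X] {F : X → Y → Z → K} {n : ℕ}
    (h : ∀ r, HasSliceRankLE K F r → n ≤ r) : n ≤ sliceRank K F :=
  le_csInf ⟨_, hasSliceRankLE_card_left F⟩ h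

end SliceRank

section Support

variable {K : Type*} [Field K] [DecidableEq K] {ι : Type*} [Fintype ι]

theorem Submodule.exists_mem_card_support_lt {W : Submodule K (ι → K)} {x : ι → K} (hx : x ∈ W)
    (hcard : Fintype.card {i // x i ≠ 0} < finrank K W) :
    ∃ y ∈ W, Fintype.card {i // x i ≠ 0} < Fintype.card {i // y i ≠ 0} := by
  let restrict : W →ₗ[K] ({i // x i ≠ 0} → K) :=
    LinearMap.funLeft K K Subtype.val ∘ₗ W.subtype
  -- a nonzero `y ∈ W` vanishing on the support of `x` adds its own support to that of `x`
  have hker : LinearMap.ker restrict ≠ ⊥ := by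
    rw [Ne, LinearMap.ker_eq_bot]
    intro hinj
    have := LinearMap.finrank_le_finrank_of_injective hinj
    rw [Module.finrank_fintype_fun_eq_card] at this
    omega
  obtain ⟨⟨y, hyW⟩, hy, hy0⟩ := Submodule.exists_mem_ne_zero_of_ne_bot hker
  have hyx : ∀ i, x i ≠ 0 → y i = 0 := fun i hi => congrFun hy ⟨i, hi⟩
  obtain ⟨p, hp⟩ : ∃ p, y p ≠ 0 := by simpa [funext_iff] using hy0
  have hxp : x p = 0 := by_contra fun h => hp (hyx p h)
  refine ⟨x + y, W.add_mem hx hyW, Fintype.card_lt_of_injective_of_notMem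
    (fun i => ⟨i.1, by simp [hyx i.1 i.2, i.2]⟩) (fun i j hij => by simpa [Subtype.ext_iff] using hij)
    (b := ⟨p, by simp [hxp, hp]⟩) ?_⟩
  rintro ⟨⟨i, hi⟩, hip⟩
  simp only [Subtype.mk.injEq] at hip
  exact hi (hip ▸ hxp)

theorem Submodule.exists_mem_finrank_le_card_support (W : Submodule K (ι → K)) :
    ∃ x ∈ W, finrank K W ≤ Fintype.card {i // x i ≠ 0} := by
  suffices ∀ n ≤ finrank K W, ∃ x ∈ W, n ≤ Fintype.card {i // x i ≠ 0} from this _ le_rfl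
  intro n hn
  induction n with
  | zero => exact ⟨0, W.zero_mem, Nat.zero_le _⟩
  | succ n ih =>
    obtain ⟨x, hx, hnx⟩ := ih (by omega)
    rcases hnx.eq_or_lt with hnx | hnx
    · obtain ⟨y, hy, hxy⟩ := W.exists_mem_card_support_lt hx (by omega)
      exact ⟨y, hy, by omega⟩
    · exact ⟨x, hx, hnx⟩

end Support

theorem Matrix.rank_add_le {K m n : Type*} [Field K] [Fintype n] (A B : Matrix m n K) :
    (A + B).rank ≤ A.rank + B.rank := by
  have hle : LinearMap.range (A + B).mulVecLin ≤
      LinearMap.range A.mulVecLin ⊔ LinearMap.range B.mulVecLin := by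
    rintro _ ⟨v, rfl⟩
    rw [Matrix.mulVecLin_add, LinearMap.add_apply]
    exact Submodule.add_mem_sup ⟨v, rfl⟩ ⟨v, rfl⟩
  exact (Submodule.finrank_mono hle).trans (Submodule.finrank_add_le_finrank_add_finrank _ _)

section Contraction

variable {K : Type*} [Field K] {X Y Z : Type*} [Fintype Z]

def contractThird (F : X → Y → Z → K) (h : Z → K) : Matrix X Y K :=
  Matrix.of fun x y => ∑ z, F x y z * h z

theorem contractThird_sum {ι : Type*} (s : Finset ι) (T : ι → X → Y → Z → K) (h : Z → K) :
    contractThird (∑ i ∈ s, T i) h = ∑ i ∈ s, contractThird (T i) h := by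
  ext x y
  simp only [contractThird, Finset.sum_apply, Matrix.sum_apply, Matrix.of_apply, Finset.sum_mul]
  exact Finset.sum_comm

theorem contractThird_diagonal [DecidableEq Z] (h : Z → K) :
    contractThird (fun x y z : Z => if x = y ∧ y = z then (1 : K) else 0) h = diagonal h := by
  ext x y
  by_cases hxy : x = y
  · subst hxy
    simp [contractThird]
  · simp [contractThird, hxy]

theorem rank_contractThird_left_le [Fintype Y] (f : X → K) (g : Y → Z → K) (h : Z → K) :
    (contractThird (fun x y z => f x * g y z) h).rank ≤ 1 := by
  convert rank_vecMulVec_le f fun y => ∑ z, g y z * h z using 2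
  ext x y
  simp only [contractThird, of_apply, vecMulVec_apply, Finset.mul_sum, mul_assoc]

theorem rank_contractThird_middle_le [Fintype Y] (f : Y → K) (g : X → Z → K) (h : Z → K) :
    (contractThird (fun x y z => f y * g x z) h).rank ≤ 1 := by
  convert rank_vecMulVec_le (fun x => ∑ z, g x z * h z) f using 2
  ext x y
  simp only [contractThird, of_apply, vecMulVec_apply, Finset.sum_mul]
  exact Finset.sum_congr rfl fun z _ => by ring

theorem contractThird_right (f : Z → K) (g : X → Y → K) (h : Z → K) :
    contractThird (fun x y z => f z * g x y) h = (f ⬝ᵥ h) • Matrix.of g := by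
  ext x y
  simp only [contractThird, of_apply, Matrix.smul_apply, dotProduct, smul_eq_mul, Finset.sum_mul]
  exact Finset.sum_congr rfl fun z _ => by ring

end Contraction

theorem card_le_of_hasSliceRankLE_diag {K : Type*} [Field K] {ι : Type*} [Fintype ι]
    [DecidableEq ι] {r : ℕ}
    (hF : HasSliceRankLE K (fun x y z : ι => if x = y ∧ y = z then (1 : K) else 0) r) :
    Fintype.card ι ≤ r := by
  classical
  obtain ⟨T, hslice, hsum⟩ := hF
  have hdecomp : (fun x y z : ι => if x = y ∧ y = z then (1 : K) else 0) = ∑ i, T i := by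
    ext x y z
    simp only [hsum, Finset.sum_apply]
  set C := univ.filter fun i => ∃ (f : ι → K) (g : ι → ι → K), T i = fun x y z => f z * g x y
  choose f g hfg using fun i : C => (mem_filter.1 i.2).2
  let A : Matrix C ι K := Matrix.of f
  have hW : Fintype.card ι ≤ #C + finrank K (LinearMap.ker A.mulVecLin) := by
    have hrank_nullity : A.rank + finrank K (LinearMap.ker A.mulVecLin) = Fintype.card ι :=
      (LinearMap.finrank_range_add_finrank_ker A.mulVecLin).trans (finrank_fintype_fun_eq_card K)
    have hrank_le : A.rank ≤ #C := (rank_le_card_height A).trans_eq (Fintype.card_coe C)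
    omega
  obtain ⟨h, hhW, hh⟩ := (LinearMap.ker A.mulVecLin).exists_mem_finrank_le_card_support
  have hrank : ∀ i, (contractThird (T i) h).rank ≤ if i ∈ C then 0 else 1 := by
    intro i
    split_ifs with hi
    · have : f ⟨i, hi⟩ ⬝ᵥ h = 0 := congrFun (LinearMap.mem_ker.1 hhW) ⟨i, hi⟩
      rw [hfg ⟨i, hi⟩, contractThird_right, this, zero_smul, rank_zero]
    · rcases hslice i with ⟨f', g', hT⟩ | ⟨f', g', hT⟩ | hT
      · exact hT ▸ rank_contractThird_left_le f' g' h
      · exact hT ▸ rank_contractThird_middle_le f' g' h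
      · exact absurd (mem_filter.2 ⟨mem_univ i, hT⟩) hi
  calc Fintype.card ι ≤ #C + Fintype.card {j // h j ≠ 0} := by omega
    _ = #C + (contractThird (∑ i, T i) h).rank := by
      rw [← hdecomp, contractThird_diagonal, rank_diagonal]
    _ ≤ #C + ∑ i, (contractThird (T i) h).rank := by
      rw [contractThird_sum]
      gcongr
      exact Finset.le_sum_of_subadditive _ rank_zero.le rank_add_le _ _
    _ ≤ #C + ∑ i, if i ∈ C then 0 else 1 := by
      gcongr with i
      exact hrank i
    _ = r := by
      simp [Finset.sum_ite, Finset.filter_not, ← compl_eq_univ_sdiff, card_add_card_compl]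

/-- If a finite group `G` contains a multiplicative matching of cardinality
`m`, then the slice rank of the multiplication tensor of `G` over any field is
at least `m`. -/
theorem le_sliceRank_of_multiplicative_matching {K : Type*} [Field K]
    {G : Type*} [Group G] [Fintype G] [DecidableEq G] {m : ℕ}
    (s t u : Fin m → G)
    (hmatch : ∀ i j k, s i * t j * u k = 1 ↔ i = j ∧ j = k) :
    m ≤ sliceRank K (fun g h k : G => if g * h = k then (1 : K) else 0) := by
  refine le_sliceRank fun r hr => ?_
  have hrestrict : (fun i j k => if s i * t j = (u k)⁻¹ then (1 : K) else 0) =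
      fun i j k : Fin m => if i = j ∧ j = k then (1 : K) else 0 := by
    ext i j k
    simp only [← mul_eq_one_iff_eq_inv, hmatch]
  have hdiag : HasSliceRankLE K (fun i j k : Fin m => if i = j ∧ j = k then (1 : K) else 0) r :=
    hrestrict ▸ hr.comp s t fun k => (u k)⁻¹
  simpa using card_le_of_hasSliceRankLE_diag hdiag
end

section
/- If S, T, U are subsets of a finite group G satisfying the triple product property and |G|/(|S||T||U|)^{2/3} ≥ k, where k is the number of conjugacy classes of G, then the inequality (|S||T||U|)^{ω/3} ≤ Σ_i d_i^ω holds for every real ω > 0, where d_1,...,d_k are the dimensions of the irreducible complex representations of G. -/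
open Finset

/-! Pigeonhole on `∑ dᵢ² = |G|` gives some `dᵢ² ≥ |G| / k ≥ (|S||T||U|)^{2/3}`, and then the single
term `dᵢ^ω` already dominates `(|S||T||U|)^{ω/3}`. -/

lemma rpow_div_three_le_rpow_of_rpow_two_thirds_le_sq {N x ω : ℝ} (hN : 0 ≤ N) (hx : 0 ≤ x)
    (h : N ^ (2 / 3 : ℝ) ≤ x ^ 2) (hω : 0 ≤ ω) : N ^ (ω / 3) ≤ x ^ ω :=
  calc N ^ (ω / 3) = (N ^ (2 / 3 : ℝ)) ^ (ω / 2) := by rw [← Real.rpow_mul hN]; ring_nf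
    _ ≤ (x ^ 2) ^ (ω / 2) := Real.rpow_le_rpow (by positivity) h (by positivity)
    _ = x ^ ω := by rw [← Real.rpow_natCast, ← Real.rpow_mul hx]; ring_nf

lemma rpow_div_three_le_sum_rpow_of_card_mul_le_sum_sq {ι : Type*} [Fintype ι] [Nonempty ι]
    {d : ι → ℝ} (hd : ∀ i, 0 ≤ d i) {N ω : ℝ} (hN : 0 ≤ N)
    (h : Fintype.card ι * N ^ (2 / 3 : ℝ) ≤ ∑ i, d i ^ 2) (hω : 0 ≤ ω) :
    N ^ (ω / 3) ≤ ∑ i, d i ^ ω := by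
  obtain ⟨i, -, hi⟩ := exists_le_of_sum_le (f := fun _ ↦ N ^ (2 / 3 : ℝ)) (g := fun i ↦ d i ^ 2)
    univ_nonempty (by simpa only [sum_const, card_univ, nsmul_eq_mul] using h)
  calc N ^ (ω / 3) ≤ d i ^ ω := rpow_div_three_le_rpow_of_rpow_two_thirds_le_sq hN (hd i) hi hω
    _ ≤ ∑ i, d i ^ ω := single_le_sum (fun j _ ↦ Real.rpow_nonneg (hd j) ω) (mem_univ i)

theorem tpp_trivial_of_small_sets_general {G : Type*} [Fintype G]
    (S T U : Finset G)
    (k : ℕ)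
    (d : Fin k → ℕ)
    (hsum : ∑ i, (d i) ^ 2 = Fintype.card G)
    (hsize : (k : ℝ) ≤
      (Fintype.card G : ℝ) / ((S.card * T.card * U.card : ℝ)) ^ ((2 : ℝ) / 3)) :
    ∀ ω : ℝ, 0 < ω →
      ((S.card * T.card * U.card : ℝ)) ^ (ω / 3) ≤ ∑ i, (d i : ℝ) ^ ω := by
  intro ω hω
  set N : ℝ := S.card * T.card * U.card
  rcases (show 0 ≤ N by positivity).eq_or_lt with hN | hN
  · rw [← hN, Real.zero_rpow (by positivity)]
    exact sum_nonneg fun i _ ↦ Real.rpow_nonneg (Nat.cast_nonneg _) ω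
  obtain ⟨x, -⟩ : S.Nonempty := card_pos.mp <| Nat.pos_of_ne_zero fun h ↦ by simp [N, h] at hN
  have hk : k ≠ 0 := by
    rintro rfl
    have : Nonempty G := ⟨x⟩
    exact Fintype.card_ne_zero (α := G) (by simpa using hsum.symm)
  have : NeZero k := ⟨hk⟩
  have hsum' : ∑ i, (d i : ℝ) ^ 2 = Fintype.card G := by exact_mod_cast hsum
  refine rpow_div_three_le_sum_rpow_of_card_mul_le_sum_sq (fun i ↦ Nat.cast_nonneg _) hN.le ?_ hω.le
  rw [Fintype.card_fin, hsum', ← le_div_iff₀ (by positivity)]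
  exact hsize

/-- If `S, T, U ⊆ G` satisfy the triple product property and
`|G| / (|S||T||U|)^{2/3} ≥ k`, where `k` is the number of conjugacy classes of
`G` and `d_1, …, d_k` are the dimensions of the irreducible complex
representations of `G` (characterized by: there are `k` of them, each positive,
and the sum of their squares is `|G|`), then `(|S||T||U|)^{ω/3} ≤ Σ_i d_i^ω`
for every real `ω > 0`. -/
theorem tpp_trivial_of_small_sets {G : Type*} [Group G] [Fintype G]
    (S T U : Finset G)
    (htpp : ∀ x₁ ∈ S, ∀ x₂ ∈ S, ∀ y₁ ∈ T, ∀ y₂ ∈ T, ∀ z₁ ∈ U, ∀ z₂ ∈ U,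
      (x₁ * x₂⁻¹) * (y₁ * y₂⁻¹) * (z₁ * z₂⁻¹) = 1 →
        x₁ = x₂ ∧ y₁ = y₂ ∧ z₁ = z₂)
    (k : ℕ) (hk : k = Nat.card (ConjClasses G))
    (d : Fin k → ℕ) (hd : ∀ i, 1 ≤ d i)
    (hsum : ∑ i, (d i) ^ 2 = Fintype.card G)
    (hsize : (k : ℝ) ≤
      (Fintype.card G : ℝ) / ((S.card * T.card * U.card : ℝ)) ^ ((2 : ℝ) / 3)) :
    ∀ ω : ℝ, 0 < ω →
      ((S.card * T.card * U.card : ℝ)) ^ (ω / 3) ≤ ∑ i, (d i : ℝ) ^ ω :=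
  tpp_trivial_of_small_sets_general S T U k d hsum hsize
end

section
/- For every integer m ≥ 1, the cyclic group Z/mZ contains a border multiplicative matching of cardinality at least ⌈m/2⌉. -/
/-!
Take `s i = t i = i`, `u k = -2k`, `a i = b i = i²`, `c k = -2k²` for `0 ≤ i, j, k < ⌈m/2⌉`.
Since `|i + j - 2k| < m`, the relation `i + j - 2k ≡ 0 (mod m)` forces `i + j = 2k` in `ℤ`, and then
`2 (i² + j² - 2k²) = (i - j)²`: the weight is nonnegative and vanishes only when `i = j = k`.
-/

open Function

def IsBorderMatching {G ι : Type*} [AddMonoid G] (s t u : ι → G) (a b c : ι → ℤ) : Prop :=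
  (∀ i j k, (s i + t j + u k = 0 ∧ a i + b j + c k = 0) ↔ (i = j ∧ j = k)) ∧
    ∀ i j k, s i + t j + u k = 0 → 0 ≤ a i + b j + c k

theorem IsBorderMatching.map {G H ι : Type*} [AddMonoid G] [AddMonoid H] {s t u : ι → G}
    {a b c : ι → ℤ} (h : IsBorderMatching s t u a b c) (φ : G →+ H)
    (hφ : ∀ i j k, φ (s i + t j + u k) = 0 → s i + t j + u k = 0) :
    IsBorderMatching (φ ∘ s) (φ ∘ t) (φ ∘ u) a b c := by
  have hzero : ∀ i j k, φ (s i) + φ (t j) + φ (u k) = 0 ↔ s i + t j + u k = 0 := fun i j k => by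
    rw [← map_add, ← map_add]
    exact ⟨hφ i j k, fun h => by rw [h, map_zero]⟩
  refine ⟨fun i j k => ?_, fun i j k hs => h.2 i j k ((hzero i j k).1 hs)⟩
  simp only [comp_apply, hzero]
  exact h.1 i j k

theorem two_mul_sq_add_sq_sub_two_mul_sq {x y z : ℤ} (h : x + y = 2 * z) :
    2 * (x ^ 2 + y ^ 2 - 2 * z ^ 2) = (x - y) ^ 2 := by
  obtain rfl : x = 2 * z - y := by omega
  ring

theorem isBorderMatching_int {ι : Type*} {v : ι → ℤ} (hv : Injective v) :
    IsBorderMatching v v (fun k => -2 * v k) (fun i => v i ^ 2) (fun j => v j ^ 2)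
      (fun k => -2 * v k ^ 2) := by
  have hweight : ∀ i j k, v i + v j + -2 * v k = 0 →
      2 * (v i ^ 2 + v j ^ 2 + -2 * v k ^ 2) = (v i - v j) ^ 2 := fun i j k h => by
    rw [← two_mul_sq_add_sq_sub_two_mul_sq (z := v k) (by linarith)]
    ring
  refine ⟨fun i j k => ⟨fun ⟨hs, ha⟩ => ?_, ?_⟩, fun i j k hs => ?_⟩
  · have hij : v i = v j := by nlinarith [hweight i j k hs]
    have hjk : v j = v k := by linarith
    exact ⟨hv hij, hv hjk⟩
  · rintro ⟨rfl, rfl⟩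
    constructor <;> ring
  · nlinarith [hweight i j k hs, sq_nonneg (v i - v j)]

theorem Int.eq_zero_of_intCast_zmod_eq_zero {m : ℕ} {x : ℤ} (hx : (x : ZMod m) = 0)
    (hlt : |x| < m) : x = 0 :=
  Int.eq_zero_of_abs_lt_dvd ((ZMod.intCast_zmod_eq_zero_iff_dvd x m).1 hx) hlt

theorem abs_add_sub_two_mul_lt {m i j k : ℕ} (hi : i < (m + 1) / 2) (hj : j < (m + 1) / 2)
    (hk : k < (m + 1) / 2) : |(i + j - 2 * k : ℤ)| < m := by
  rw [abs_lt]
  omega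

theorem zmod_border_matching_general (m : ℕ) :
    ∃ N : ℕ, (m + 1) / 2 ≤ N ∧
      ∃ (s t u : Fin N → ZMod m) (a b c : Fin N → ℤ),
        (∀ i j k, (s i + t j + u k = 0 ∧ a i + b j + c k = 0) ↔ (i = j ∧ j = k)) ∧
        (∀ i j k, s i + t j + u k = 0 → 0 ≤ a i + b j + c k) := by
  let v : Fin ((m + 1) / 2) → ℤ := fun i => i.val
  have hv : Injective v := fun i j h => Fin.ext (Int.ofNat_inj.1 h)
  refine ⟨_, le_rfl, _, _, _, _, _, _, (isBorderMatching_int hv).map (Int.castAddHom (ZMod m)) ?_⟩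
  intro i j k hzero
  refine Int.eq_zero_of_intCast_zmod_eq_zero hzero ?_
  simpa [v, sub_eq_add_neg] using abs_add_sub_two_mul_lt i.isLt j.isLt k.isLt

/-- The cyclic group `Z/mZ` (written additively) contains a border
multiplicative matching of cardinality at least `⌈m/2⌉`. -/
theorem zmod_border_matching (m : ℕ) (hm : 1 ≤ m) :
    ∃ N : ℕ, (m + 1) / 2 ≤ N ∧
      ∃ (s t u : Fin N → ZMod m) (a b c : Fin N → ℤ),
        (∀ i j k, (s i + t j + u k = 0 ∧ a i + b j + c k = 0) ↔ (i = j ∧ j = k)) ∧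
        (∀ i j k, s i + t j + u k = 0 → 0 ≤ a i + b j + c k) :=
  zmod_border_matching_general m
end

section
/- Let 1 → N → G → G/N → 1 be a short exact sequence of groups. If N contains a multiplicative matching of cardinality m and G/N contains a multiplicative matching of cardinality m', then G contains a multiplicative matching of cardinality m·m'. -/
/-!
Lift the matching `(x, y, z)` of the quotient to `X, Y` in `G` and pair it with the matching
`(s, t, u)` of the kernel as `S = s X`, `T = X⁻¹ t X Y`, `U = (X Y)⁻¹ u`. In a matching
`z_b = (x_b y_b)⁻¹`, so the image of `S T U` in the quotient is `x_b y_b' z_b''`, which forces the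
quotient indices to agree; once they do, the conjugations cancel and `S T U = s t u`.
-/

def IsMultMatching {ι G : Type*} [Group G] (s t u : ι → G) : Prop :=
  ∀ i j k, s i * t j * u k = 1 ↔ i = j ∧ j = k

namespace IsMultMatching

variable {ι κ G Q : Type*} [Group G] [Group Q]

theorem eq_mul_inv {s t u : ι → G} (h : IsMultMatching s t u) (k : ι) :
    u k = (s k * t k)⁻¹ :=
  eq_inv_of_mul_eq_one_right ((h k k k).2 ⟨rfl, rfl⟩)

theorem comp_equiv {s t u : ι → G} (h : IsMultMatching s t u) (e : κ ≃ ι) :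
    IsMultMatching (s ∘ e) (t ∘ e) (u ∘ e) := fun i j k => by
  simpa only [Function.comp_apply, e.injective.eq_iff] using h (e i) (e j) (e k)

theorem extension {f : G →* Q} {s t u : ι → G} (hs : ∀ i, f (s i) = 1) (ht : ∀ i, f (t i) = 1)
    (hu : ∀ i, f (u i) = 1) (hstu : IsMultMatching s t u) {X Y : κ → G} {z : κ → Q}
    (hXYz : IsMultMatching (f ∘ X) (f ∘ Y) z) :
    IsMultMatching (fun p : ι × κ => s p.1 * X p.2)
      (fun p => (X p.2)⁻¹ * t p.1 * X p.2 * Y p.2) (fun p => (X p.2 * Y p.2)⁻¹ * u p.1) := by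
  rintro ⟨a, b⟩ ⟨a', b'⟩ ⟨a'', b''⟩
  constructor
  · intro h
    have hb : b = b' ∧ b' = b'' := by
      refine (hXYz b b' b'').1 ?_
      rw [hXYz.eq_mul_inv b'', ← map_one f, ← h]
      simp only [Function.comp_apply, map_mul, map_inv, hs, ht, hu, one_mul, mul_one]
      group
    obtain ⟨rfl, rfl⟩ := hb
    have ha := (hstu a a' a'').1 (by rw [← h]; group)
    simp only [ha, and_self]
  · rintro ⟨⟨⟩, ⟨⟩⟩
    calc s a * X b * ((X b)⁻¹ * t a * X b * Y b) * ((X b * Y b)⁻¹ * u a)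
        = s a * t a * u a := by group
      _ = 1 := (hstu a a a).2 ⟨rfl, rfl⟩

end IsMultMatching

/-- If a normal subgroup `N` of `G` contains a multiplicative matching of
cardinality `m` and the quotient `G/N` contains a multiplicative matching of
cardinality `m'`, then `G` contains one of cardinality `m·m'`. -/
theorem matching_of_extension {G : Type*} [Group G] (N : Subgroup G) [N.Normal]
    {m m' : ℕ} (s t u : Fin m → N)
    (hN : ∀ i j k, (s i : G) * t j * u k = 1 ↔ i = j ∧ j = k)
    (x y z : Fin m' → G ⧸ N)
    (hQ : ∀ i j k, x i * y j * z k = 1 ↔ i = j ∧ j = k) :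
    ∃ S T U : Fin (m * m') → G,
      ∀ i j k, S i * T j * U k = 1 ↔ i = j ∧ j = k := by
  have mk_coe_eq_one (g : N) : QuotientGroup.mk' N g = 1 := (QuotientGroup.eq_one_iff _).2 g.2
  have hlift : IsMultMatching (QuotientGroup.mk' N ∘ fun b => (x b).out)
      (QuotientGroup.mk' N ∘ fun b => (y b).out) z := by
    simpa only [IsMultMatching, Function.comp_apply, QuotientGroup.mk'_apply,
      QuotientGroup.out_eq'] using hQ
  exact ⟨_, _, _, (IsMultMatching.extension (fun i => mk_coe_eq_one (s i)) (fun i => mk_coe_eq_one (t i))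
    (fun i => mk_coe_eq_one (u i)) hN hlift).comp_equiv finProdFinEquiv.symm⟩
end

section
/- Every finite p-group of order p^n contains a border multiplicative matching of cardinality at least p^n/2^n. -/
/-!
Choose a central element `g` of order `p`. The cyclic group `⟨g⟩` carries the matching
`(g ^ x, g ^ y, g ^ (-2z))` with weights `(x², y², -2z²)` for `0 ≤ x, y, z < ⌈p/2⌉`: a product is
trivial only when `x + y = 2z`, and then the weight is `(x - y)² / 2`. Border matchings of a normal
subgroup and of its quotient combine into one of the whole group whose cardinality is the product,
so induction on `n` gives a matching of cardinality `⌈p/2⌉ ^ n ≥ p ^ n / 2 ^ n`.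
-/

open Function Subgroup

section BorderMatching

variable {G : Type*} [Group G]

structure IsBorderMatching_s12 {ι : Type*} (s t u : ι → G) (a b c : ι → ℤ) : Prop where
  mul_eq_one_and_add_eq_zero_iff :
    ∀ i j k, (s i * t j * u k = 1 ∧ a i + b j + c k = 0) ↔ (i = j ∧ j = k)
  add_nonneg_of_mul_eq_one : ∀ i j k, s i * t j * u k = 1 → 0 ≤ a i + b j + c k

namespace IsBorderMatching_s12

variable {ι κ : Type*} {s t u : ι → G} {a b c : ι → ℤ}

theorem mul_eq_one_diag (h : IsBorderMatching_s12 s t u a b c) (i : ι) : s i * t i * u i = 1 :=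
  ((h.mul_eq_one_and_add_eq_zero_iff i i i).2 ⟨rfl, rfl⟩).1

theorem add_eq_zero_diag (h : IsBorderMatching_s12 s t u a b c) (i : ι) : a i + b i + c i = 0 :=
  ((h.mul_eq_one_and_add_eq_zero_iff i i i).2 ⟨rfl, rfl⟩).2

theorem comp_equiv (h : IsBorderMatching_s12 s t u a b c) (e : κ ≃ ι) :
    IsBorderMatching_s12 (s ∘ e) (t ∘ e) (u ∘ e) (a ∘ e) (b ∘ e) (c ∘ e) where
  mul_eq_one_and_add_eq_zero_iff i j k := by
    simp only [comp_apply, h.mul_eq_one_and_add_eq_zero_iff, e.apply_eq_iff_eq]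
  add_nonneg_of_mul_eq_one i j k := h.add_nonneg_of_mul_eq_one (e i) (e j) (e k)

end IsBorderMatching_s12

theorem isBorderMatching_zpow {g : G} {m : ℕ} (hm : 2 * m ≤ orderOf g + 1) :
    IsBorderMatching_s12 (fun x : Fin m => g ^ (x : ℤ)) (fun y => g ^ (y : ℤ))
      (fun z => g ^ (-(2 * z : ℤ))) (fun x => (x : ℤ) ^ 2) (fun y => (y : ℤ) ^ 2)
      (fun z => -(2 * (z : ℤ) ^ 2)) := by
  have key : ∀ x y z : Fin m, g ^ (x : ℤ) * g ^ (y : ℤ) * g ^ (-(2 * z : ℤ)) = 1 →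
      (x : ℤ) + y = 2 * z := by
    intro x y z h
    rw [← zpow_add, ← zpow_add, ← orderOf_dvd_iff_zpow_eq_one] at h
    -- `|x + y - 2z| ≤ 2(m - 1) < orderOf g`
    have := Int.eq_zero_of_abs_lt_dvd h (by rw [abs_lt]; omega)
    omega
  constructor
  · intro x y z
    constructor
    · rintro ⟨hmul, hadd⟩
      have hxyz := key x y z hmul
      have hxy : ((x : ℤ) - y) ^ 2 = 0 := by linear_combination 2 * hadd - (x + y + 2 * z : ℤ) * hxyz
      have : (x : ℤ) = y := by nlinarith
      omega
    · rintro ⟨rfl, rfl⟩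
      refine ⟨?_, by ring⟩
      rw [← zpow_add, ← zpow_add]
      ring_nf
      exact zpow_zero g
  · intro x y z hmul
    have hxyz := key x y z hmul
    nlinarith [sq_nonneg ((x : ℤ) - y)]

theorem exists_nonneg_forall_pos_add {κ : Type*} [Finite κ] (a b c : κ → ℤ) :
    ∃ K : ℤ, 0 ≤ K ∧ ∀ x y z, 0 < K + (a x + b y + c z) := by
  obtain ⟨D, hD⟩ := (Set.finite_range fun v : κ × κ × κ => a v.1 + b v.2.1 + c v.2.2).bddBelow
  refine ⟨|D| + 1, by positivity, fun x y z => ?_⟩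
  linarith [hD ⟨(x, y, z), rfl⟩, neg_abs_le D]

section Extension

variable {Q ι κ : Type*} [Group Q] [Finite κ] {f : G →* Q}
  {S T U : ι → Q} {A B C : ι → ℤ} {s t u : κ → G} {a b c : κ → ℤ}

/-- With `α, β` lifts of `S, T`, the triples `(s x * α i, α j⁻¹ * t y * α j * β j,
(α k * β k)⁻¹ * u z)` lie over `(S i, T j, U k)` and multiply to `s x * t y * u z` when
`i = j = k`; the weight `K` makes the quotient weights dominate those of the kernel. -/
theorem IsBorderMatching_s12.extend (hf : Surjective f) (hQ : IsBorderMatching_s12 S T U A B C)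
    (hN : IsBorderMatching_s12 s t u a b c) (hs : ∀ x, f (s x) = 1) (ht : ∀ y, f (t y) = 1)
    (hu : ∀ z, f (u z) = 1) :
    ∃ (s' t' u' : ι × κ → G) (a' b' c' : ι × κ → ℤ), IsBorderMatching_s12 s' t' u' a' b' c' := by
  obtain ⟨K, hK, hKpos⟩ := exists_nonneg_forall_pos_add a b c
  set α := fun i => surjInv hf (S i)
  set β := fun i => surjInv hf (T i)
  refine ⟨fun v => s v.2 * α v.1, fun v => (α v.1)⁻¹ * t v.2 * α v.1 * β v.1,
    fun v => (α v.1 * β v.1)⁻¹ * u v.2, fun v => K * A v.1 + a v.2, fun v => K * B v.1 + b v.2,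
    fun v => K * C v.1 + c v.2, ?_⟩
  have hα i : f (α i) = S i := surjInv_eq hf _
  have hβ i : f (β i) = T i := surjInv_eq hf _
  have hU k : (S k * T k)⁻¹ = U k := inv_eq_of_mul_eq_one_right (hQ.mul_eq_one_diag k)
  have map_mul_eq_one {i j k x y z} (h : s x * α i * ((α j)⁻¹ * t y * α j * β j) *
      ((α k * β k)⁻¹ * u z) = 1) : S i * T j * U k = 1 := by
    simpa [hs, ht, hu, hα, hβ, ← hU] using congrArg f h
  have diag_mul {i x y z} : s x * α i * ((α i)⁻¹ * t y * α i * β i) * ((α i * β i)⁻¹ * u z) =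
      s x * t y * u z := by group
  have weight_pos {i j k} (x y z : κ) (hQ1 : S i * T j * U k = 1) (hne : A i + B j + C k ≠ 0) :
      0 < K * A i + a x + (K * B j + b y) + (K * C k + c z) := by
    have hone : 1 ≤ A i + B j + C k := by
      have := hQ.add_nonneg_of_mul_eq_one i j k hQ1
      omega
    have : K * 1 ≤ K * (A i + B j + C k) := mul_le_mul_of_nonneg_left hone hK
    linarith [hKpos x y z]
  constructor
  · rintro ⟨i, x⟩ ⟨j, y⟩ ⟨k, z⟩
    constructor
    · rintro ⟨hmul, hadd⟩
      have hQ0 : A i + B j + C k = 0 := by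
        by_contra hne
        exact (weight_pos x y z (map_mul_eq_one hmul) hne).ne' hadd
      obtain ⟨rfl, rfl⟩ := (hQ.mul_eq_one_and_add_eq_zero_iff i j k).1 ⟨map_mul_eq_one hmul, hQ0⟩
      rw [diag_mul] at hmul
      obtain ⟨rfl, rfl⟩ := (hN.mul_eq_one_and_add_eq_zero_iff x y z).1
        ⟨hmul, by linear_combination hadd - K * hQ0⟩
      exact ⟨rfl, rfl⟩
    · rintro ⟨h₁, h₂⟩
      simp only [Prod.ext_iff] at h₁ h₂
      obtain ⟨rfl, rfl⟩ := h₁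
      obtain ⟨rfl, rfl⟩ := h₂
      refine ⟨diag_mul.trans (hN.mul_eq_one_diag x), ?_⟩
      linear_combination K * hQ.add_eq_zero_diag i + hN.add_eq_zero_diag x
  · rintro ⟨i, x⟩ ⟨j, y⟩ ⟨k, z⟩ hmul
    by_cases hQ0 : A i + B j + C k = 0
    · obtain ⟨rfl, rfl⟩ := (hQ.mul_eq_one_and_add_eq_zero_iff i j k).1 ⟨map_mul_eq_one hmul, hQ0⟩
      rw [diag_mul] at hmul
      calc 0 ≤ a x + b y + c z := hN.add_nonneg_of_mul_eq_one x y z hmul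
        _ = _ := by linear_combination -K * hQ0
    · exact (weight_pos x y z (map_mul_eq_one hmul) hQ0).le

end Extension

theorem Subgroup.normal_of_le_center {H : Subgroup G} (hH : H ≤ center G) : H.Normal where
  conj_mem n hn g := by
    rwa [mem_center_iff.mp (hH hn) g, mul_inv_cancel_right]

theorem IsPGroup.exists_mem_center_orderOf_eq {p : ℕ} [Fact p.Prime] [Finite G] [Nontrivial G]
    (hG : IsPGroup p G) : ∃ g ∈ center G, orderOf g = p := by
  have := hG.center_nontrivial
  obtain ⟨k, hk, hcard⟩ := (hG.to_subgroup (center G)).nontrivial_iff_card.mp this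
  obtain ⟨z, hz⟩ := exists_prime_orderOf_dvd_card' (G := center G) p
    (hcard ▸ dvd_pow_self p hk.ne')
  exact ⟨z, z.2, by rwa [Subgroup.orderOf_coe]⟩

end BorderMatching

theorem exists_isBorderMatching_of_card_eq_prime_pow {p : ℕ} (hp : p.Prime) (n : ℕ)
    (G : Type*) [Group G] (hG : Nat.card G = p ^ n) :
    ∃ (s t u : Fin (((p + 1) / 2) ^ n) → G) (a b c : Fin (((p + 1) / 2) ^ n) → ℤ),
      IsBorderMatching_s12 s t u a b c := by
  have : Fact p.Prime := ⟨hp⟩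
  induction n generalizing G with
  | zero =>
    have : Subsingleton (Fin (((p + 1) / 2) ^ 0)) := by rw [pow_zero]; infer_instance
    refine ⟨1, 1, 1, 0, 0, 0, ⟨fun i j k => ?_, fun _ _ _ _ => le_rfl⟩⟩
    exact iff_of_true (by simp) ⟨Subsingleton.elim _ _, Subsingleton.elim _ _⟩
  | succ n ih =>
    have : Finite G := Nat.finite_of_card_ne_zero (by simp [hG, hp.ne_zero])
    have : Nontrivial G := (IsPGroup.nontrivial_iff_card (IsPGroup.of_card hG)).mpr
      ⟨n + 1, n.succ_pos, hG⟩
    obtain ⟨g, hg, hord⟩ := (IsPGroup.of_card hG).exists_mem_center_orderOf_eq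
    have : (zpowers g).Normal := normal_of_le_center (zpowers_le.mpr hg)
    have hcard : Nat.card (G ⧸ zpowers g) = p ^ n := by
      have := card_eq_card_quotient_mul_card_subgroup (zpowers g)
      rw [hG, Nat.card_zpowers, hord, pow_succ] at this
      exact (Nat.eq_of_mul_eq_mul_right hp.pos this).symm
    obtain ⟨S, T, U, A, B, C, hQ⟩ := ih _ hcard
    have hmem (k : ℤ) : QuotientGroup.mk' (zpowers g) (g ^ k) = 1 :=
      (QuotientGroup.eq_one_iff _).mpr (zpow_mem_zpowers g k)
    obtain ⟨s, t, u, a, b, c, h⟩ := hQ.extend (QuotientGroup.mk'_surjective _)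
      (isBorderMatching_zpow (g := g) (m := (p + 1) / 2) (by omega)) (fun _ => hmem _)
      (fun _ => hmem _) (fun _ => hmem _)
    have e := (finCongr (pow_succ ((p + 1) / 2) n)).trans finProdFinEquiv.symm
    exact ⟨_, _, _, _, _, _, h.comp_equiv e⟩

/-- Every finite `p`-group of order `p^n` contains a border multiplicative
matching of cardinality at least `p^n / 2^n`. -/
theorem pGroup_border_matching {G : Type*} [Group G] [Fintype G]
    (p n : ℕ) (hp : p.Prime) (hG : Fintype.card G = p ^ n) :
    ∃ M : ℕ, ((p : ℝ) ^ n / 2 ^ n) ≤ (M : ℝ) ∧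
      ∃ (s t u : Fin M → G) (a b c : Fin M → ℤ),
        (∀ i j k, (s i * t j * u k = 1 ∧ a i + b j + c k = 0) ↔ (i = j ∧ j = k)) ∧
        (∀ i j k, s i * t j * u k = 1 → 0 ≤ a i + b j + c k) := by
  obtain ⟨s, t, u, a, b, c, h⟩ :=
    exists_isBorderMatching_of_card_eq_prime_pow hp n G (Nat.card_eq_fintype_card.trans hG)
  refine ⟨((p + 1) / 2) ^ n, ?_, s, t, u, a, b, c, h.mul_eq_one_and_add_eq_zero_iff,
    h.add_nonneg_of_mul_eq_one⟩
  have half_le : (p : ℝ) / 2 ≤ ((p + 1) / 2 : ℕ) := by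
    rw [div_le_iff₀ two_pos]
    exact_mod_cast (by omega : p ≤ (p + 1) / 2 * 2)
  rw [← div_pow, Nat.cast_pow]
  exact pow_le_pow_left₀ (by positivity) half_le n
end

section
/- Flat rank is additive under direct sum of tensors over an infinite field: for tensors t ∈ F^X ⊗ F^Y ⊗ F^Z and t' ∈ F^{X'} ⊗ F^{Y'} ⊗ F^{Z'} (with the index sets disjoint), frank(t ⊕ t') = frank(t) + frank(t'). -/
/-- Contraction of the third factor of a 3-tensor with a vector. -/
noncomputable def contractZ {K : Type*} [Field K] {X Y Z : Type*} [Fintype Z]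
    (t : X → Y → Z → K) (v : Z → K) : Matrix X Y K :=
  Matrix.of fun x y => ∑ z, t x y z * v z

/-- `HasFlatRankLE K t ℓ` : there is a subspace `V` of the third factor, of
codimension `c`, with all contractions of `t` against vectors of `V` of matrix
rank at most `r`, and `r + c ≤ ℓ`. -/
def HasFlatRankLE {X Y Z : Type*} (K : Type*) [Field K]
    [Fintype X] [Fintype Y] [Fintype Z] (t : X → Y → Z → K) (ℓ : ℕ) : Prop :=
  ∃ (V : Submodule K (Z → K)) (r : ℕ),
    (∀ v ∈ V, (contractZ t v).rank ≤ r) ∧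
    r + (Fintype.card Z - Module.finrank K V) ≤ ℓ

/-- The flat rank of a 3-tensor. -/
noncomputable def flatRank {X Y Z : Type*} (K : Type*) [Field K]
    [Fintype X] [Fintype Y] [Fintype Z] (t : X → Y → Z → K) : ℕ :=
  sInf {ℓ | HasFlatRankLE K t ℓ}

/-- The direct sum of two 3-tensors on disjoint index sets. -/
def tensorDirectSum {K : Type*} [Field K] {X Y Z X' Y' Z' : Type*}
    (t : X → Y → Z → K) (t' : X' → Y' → Z' → K) :
    (X ⊕ X') → (Y ⊕ Y') → (Z ⊕ Z') → K := fun x y z =>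
  match x, y, z with
  | Sum.inl x, Sum.inl y, Sum.inl z => t x y z
  | Sum.inr x, Sum.inr y, Sum.inr z => t' x y z
  | _, _, _ => 0

/-!
Given witnesses for `t` and `t'`, the product of the two subspaces is a witness for `t ⊕ t'`:
contractions of `t ⊕ t'` are block diagonal, so their ranks add, and so do the codimensions.

Conversely, project a witness `V` for `t ⊕ t'` onto the two blocks of `Z ⊕ Z'`, giving `V₁`
and `V₂`. Since `V ≤ V₁ × V₂`, the codimensions of `V₁` and `V₂` add up to at most that of `V`.
Over an infinite field a single `v ∈ V` makes both blocks reach their maximal ranks on `V₁` and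
`V₂` simultaneously: on the line through the two separate maximizers, each block loses rank only
at the finitely many roots of a nonzero minor. Hence the two maximal ranks add up to at most the
rank bound of `V`.
-/

open Matrix Module Polynomial

theorem Submodule.finrank_le_card {K Z : Type*} [DivisionRing K] [Fintype Z]
    (V : Submodule K (Z → K)) :
    finrank K V ≤ Fintype.card Z :=
  V.finrank_le.trans_eq (finrank_fintype_fun_eq_card K)

theorem Submodule.finrank_prod {K V W : Type*} [DivisionRing K] [AddCommGroup V] [Module K V]
    [AddCommGroup W] [Module K W] [FiniteDimensional K V] [FiniteDimensional K W]
    (p : Submodule K V) (q : Submodule K W) :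
    finrank K (p.prod q) = finrank K p + finrank K q := by
  rw [← p.range_subtype, ← q.range_subtype, ← LinearMap.range_prodMap,
    LinearMap.finrank_range_of_inj (p.injective_subtype.prodMap q.injective_subtype),
    Module.finrank_prod, p.range_subtype, q.range_subtype]

theorem Submodule.finrank_comap_sumArrowLequivProdArrow_prod {K Z Z' : Type*} [Field K]
    [Fintype Z] [Fintype Z'] (V : Submodule K (Z → K)) (V' : Submodule K (Z' → K)) :
    finrank K ((V.prod V').comap (LinearEquiv.sumArrowLequivProdArrow Z Z' K K).toLinearMap) =
      finrank K V + finrank K V' := by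
  rw [Submodule.comap_equiv_eq_map_symm, LinearEquiv.finrank_map_eq, Submodule.finrank_prod]

theorem Matrix.rank_fromBlocks_zero_zero {K : Type*} [Field K] {m m' n n' : Type*} [Fintype m]
    [Fintype m'] [Fintype n] [Fintype n'] (A : Matrix m n K) (D : Matrix m' n' K) :
    (fromBlocks A 0 0 D).rank = A.rank + D.rank := by
  let eₘ := LinearEquiv.sumArrowLequivProdArrow m m' K K
  let eₙ := LinearEquiv.sumArrowLequivProdArrow n n' K K
  have h : (fromBlocks A 0 0 D).mulVecLin =
      eₘ.symm.toLinearMap ∘ₗ (A.mulVecLin.prodMap D.mulVecLin) ∘ₗ eₙ.toLinearMap := by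
    ext v i
    cases i <;> simp [eₘ, eₙ, fromBlocks_mulVec] <;> rfl
  rw [rank, h, LinearMap.range_comp, LinearMap.range_comp_of_range_eq_top _ eₙ.range,
    LinearEquiv.finrank_map_eq, LinearMap.range_prodMap, Submodule.finrank_prod]
  rfl

theorem Matrix.eval_det_map_C_add_X_smul {R k : Type*} [CommRing R] [Fintype k] [DecidableEq k]
    (A B : Matrix k k R) (c : R) :
    (A.map C + (X : R[X]) • B.map C).det.eval c = (A + c • B).det := by
  rw [← coe_evalRingHom, RingHom.map_det]
  congr 1
  ext i j
  simp only [RingHom.mapMatrix_apply, map_apply, add_apply, smul_apply, coe_evalRingHom, eval_add,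
    smul_eq_mul, eval_mul, eval_X, eval_C]

section Rank

variable {K V : Type*} [Field K] [AddCommGroup V] [Module K V] {m n m' n' : Type*}
  [Fintype m] [Fintype n] [Fintype m'] [Fintype n']

theorem Matrix.exists_linearIndependent_col_comp (A : Matrix m n K) :
    ∃ g : Fin A.rank → n, LinearIndependent K (A.col ∘ g) := by
  obtain ⟨κ, a, -, hspan, hli⟩ := exists_linearIndependent' K A.col
  have : Fintype κ := have := hli.finite; Fintype.ofFinite κ
  have hcard : Fintype.card κ = A.rank := by
    rw [rank_eq_finrank_span_cols, ← hspan, finrank_span_eq_card hli]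
  exact ⟨a ∘ (Fintype.equivFinOfCardEq hcard).symm, hli.comp _ (Equiv.injective _)⟩

theorem Matrix.exists_submatrix_det_ne_zero [DecidableEq m] [DecidableEq n] (A : Matrix m n K) :
    ∃ (f : Fin A.rank → m) (g : Fin A.rank → n), (A.submatrix f g).det ≠ 0 := by
  obtain ⟨g, hg⟩ := A.exists_linearIndependent_col_comp
  have hrank : (A.submatrix id g)ᵀ.rank = A.rank := by
    rw [rank_transpose, rank_eq_finrank_span_cols]
    exact (finrank_span_eq_card hg).trans (Fintype.card_fin _)
  obtain ⟨f, hf⟩ := (A.submatrix id g)ᵀ.exists_linearIndependent_col_comp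
  refine ⟨f ∘ Fin.cast hrank.symm, g, ?_⟩
  rw [← isUnit_iff_ne_zero, ← isUnit_iff_isUnit_det, ← linearIndependent_rows_iff_isUnit]
  exact hf.comp _ (Fin.cast_injective _)

omit [Fintype m] in
theorem Matrix.le_rank_of_submatrix_det_ne_zero {k : ℕ} (A : Matrix m n K) (f : Fin k → m)
    (g : Fin k → n) (h : (A.submatrix f g).det ≠ 0) : k ≤ A.rank := by
  have := rank_of_isUnit _ ((isUnit_iff_isUnit_det _).2 (isUnit_iff_ne_zero.2 h))
  simpa [this] using rank_submatrix_le A f g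

theorem Matrix.finite_setOf_rank_add_smul_lt (A B : Matrix m n K) (c₀ : K) :
    {c : K | (A + c • B).rank < (A + c₀ • B).rank}.Finite := by
  classical
  obtain ⟨f, g, hfg⟩ := (A + c₀ • B).exists_submatrix_det_ne_zero
  set p : K[X] := ((A.submatrix f g).map C + (X : K[X]) • (B.submatrix f g).map C).det
  have hp (c : K) : p.eval c = ((A + c • B).submatrix f g).det := by
    rw [eval_det_map_C_add_X_smul]; rfl
  have hp0 : p ≠ 0 := fun h => hfg (by rw [← hp, h, eval_zero])
  refine p.roots.toFinset.finite_toSet.subset fun c hc => ?_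
  rw [Finset.mem_coe, Multiset.mem_toFinset, mem_roots hp0, IsRoot.def, hp]
  by_contra h
  exact (not_le.2 hc) (le_rank_of_submatrix_det_ne_zero _ f g h)

theorem Submodule.exists_forall_rank_le (S : Submodule K V) (L : V →ₗ[K] Matrix m n K) :
    ∃ u ∈ S, ∀ x ∈ S, (L x).rank ≤ (L u).rank := by
  obtain ⟨_, ⟨u, hu, rfl⟩, hmax⟩ := BddAbove.exists_isGreatest_of_nonempty
    (S := (fun x => (L x).rank) '' S)
    ⟨Fintype.card m, Set.forall_mem_image.2 fun x _ => rank_le_card_height _⟩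
    ⟨_, Set.mem_image_of_mem _ S.zero_mem⟩
  exact ⟨u, hu, fun x hx => hmax ⟨x, hx, rfl⟩⟩

theorem Submodule.exists_forall_rank_le_and_rank_le [Infinite K] (S : Submodule K V)
    (L : V →ₗ[K] Matrix m n K) (L' : V →ₗ[K] Matrix m' n' K) :
    ∃ v ∈ S, ∀ x ∈ S, (L x).rank ≤ (L v).rank ∧ (L' x).rank ≤ (L' v).rank := by
  obtain ⟨u, hu, hLu⟩ := S.exists_forall_rank_le L
  obtain ⟨w, hw, hL'w⟩ := S.exists_forall_rank_le L'
  -- Along the line through `u` and `w`, each rank drops below its maximum only finitely often.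
  obtain ⟨c, hc⟩ := (((L u).finite_setOf_rank_add_smul_lt (L (w - u)) 0).union
    ((L' u).finite_setOf_rank_add_smul_lt (L' (w - u)) 1)).infinite_compl.nonempty
  simp only [Set.mem_compl_iff, Set.mem_union, Set.mem_ofPred_eq, not_or, not_lt, zero_smul,
    add_zero, one_smul, add_sub_cancel, ← map_smul, ← map_add] at hc
  refine ⟨u + c • (w - u), S.add_mem hu (S.smul_mem c (S.sub_mem hw hu)), fun x hx => ?_⟩
  exact ⟨(hLu x hx).trans hc.1, (hL'w x hx).trans hc.2⟩

end Rank

section FlatRank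

variable {K : Type*} [Field K] {X Y Z X' Y' Z' : Type*} [Fintype X] [Fintype Y] [Fintype Z]
  [Fintype X'] [Fintype Y'] [Fintype Z']

noncomputable def contractZLin (t : X → Y → Z → K) : (Z → K) →ₗ[K] Matrix X Y K where
  toFun := contractZ t
  map_add' v w := by ext; simp [contractZ, mul_add, Finset.sum_add_distrib]
  map_smul' c v := by ext; simp [contractZ, Finset.mul_sum, mul_left_comm]

omit [Fintype X] [Fintype Y] [Fintype X'] [Fintype Y'] in
theorem contractZ_tensorDirectSum (t : X → Y → Z → K) (t' : X' → Y' → Z' → K)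
    (v : Z ⊕ Z' → K) :
    contractZ (tensorDirectSum t t') v =
      fromBlocks (contractZ t (v ∘ Sum.inl)) 0 0 (contractZ t' (v ∘ Sum.inr)) := by
  ext (x | x) (y | y) <;> simp [contractZ, tensorDirectSum, Fintype.sum_sum_type]

theorem hasFlatRankLE_flatRank (t : X → Y → Z → K) : HasFlatRankLE K t (flatRank K t) :=
  Nat.sInf_mem (s := {ℓ | HasFlatRankLE K t ℓ})
    ⟨_, ⊤, Fintype.card X, fun _ _ => rank_le_card_height _, le_rfl⟩

theorem flatRank_le {t : X → Y → Z → K} {ℓ : ℕ} (h : HasFlatRankLE K t ℓ) : flatRank K t ≤ ℓ :=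
  Nat.sInf_le h

theorem HasFlatRankLE.directSum {t : X → Y → Z → K} {t' : X' → Y' → Z' → K} {ℓ ℓ' : ℕ}
    (h : HasFlatRankLE K t ℓ) (h' : HasFlatRankLE K t' ℓ') :
    HasFlatRankLE K (tensorDirectSum t t') (ℓ + ℓ') := by
  obtain ⟨V, r, hV, hℓ⟩ := h
  obtain ⟨V', r', hV', hℓ'⟩ := h'
  refine ⟨(V.prod V').comap (LinearEquiv.sumArrowLequivProdArrow Z Z' K K).toLinearMap, r + r',
    fun v hv => ?_, ?_⟩
  · rw [contractZ_tensorDirectSum, rank_fromBlocks_zero_zero]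
    exact add_le_add (hV _ hv.1) (hV' _ hv.2)
  · rw [Submodule.finrank_comap_sumArrowLequivProdArrow_prod, Fintype.card_sum]
    have := V.finrank_le_card
    have := V'.finrank_le_card
    omega

theorem HasFlatRankLE.exists_of_directSum [Infinite K] {t : X → Y → Z → K}
    {t' : X' → Y' → Z' → K} {ℓ : ℕ} (h : HasFlatRankLE K (tensorDirectSum t t') ℓ) :
    ∃ ℓ₁ ℓ₂, HasFlatRankLE K t ℓ₁ ∧ HasFlatRankLE K t' ℓ₂ ∧ ℓ₁ + ℓ₂ ≤ ℓ := by
  obtain ⟨V, r, hV, hℓ⟩ := h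
  let L := contractZLin t ∘ₗ LinearMap.funLeft K K (Sum.inl : Z → Z ⊕ Z')
  let L' := contractZLin t' ∘ₗ LinearMap.funLeft K K (Sum.inr : Z' → Z ⊕ Z')
  obtain ⟨v, hv, hmax⟩ := V.exists_forall_rank_le_and_rank_le L L'
  let V₁ := V.map (LinearMap.funLeft K K (Sum.inl : Z → Z ⊕ Z'))
  let V₂ := V.map (LinearMap.funLeft K K (Sum.inr : Z' → Z ⊕ Z'))
  have h₁ : HasFlatRankLE K t ((L v).rank + (Fintype.card Z - finrank K V₁)) := by
    refine ⟨V₁, _, ?_, le_rfl⟩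
    rintro _ ⟨x, hx, rfl⟩
    exact (hmax x hx).1
  have h₂ : HasFlatRankLE K t' ((L' v).rank + (Fintype.card Z' - finrank K V₂)) := by
    refine ⟨V₂, _, ?_, le_rfl⟩
    rintro _ ⟨x, hx, rfl⟩
    exact (hmax x hx).2
  have hr : (L v).rank + (L' v).rank ≤ r := by
    have := hV v hv
    rwa [contractZ_tensorDirectSum, rank_fromBlocks_zero_zero] at this
  have hdim : finrank K V ≤ finrank K V₁ + finrank K V₂ := by
    rw [← Submodule.finrank_comap_sumArrowLequivProdArrow_prod]
    exact Submodule.finrank_mono fun x hx => ⟨⟨x, hx, rfl⟩, ⟨x, hx, rfl⟩⟩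
  refine ⟨_, _, h₁, h₂, ?_⟩
  have := V₁.finrank_le_card
  have := V₂.finrank_le_card
  rw [Fintype.card_sum] at hℓ
  omega

end FlatRank

/-- Over an infinite field, flat rank is additive under direct sums. -/
theorem flatRank_directSum {K : Type*} [Field K] [Infinite K]
    {X Y Z X' Y' Z' : Type*} [Fintype X] [Fintype Y] [Fintype Z]
    [Fintype X'] [Fintype Y'] [Fintype Z']
    (t : X → Y → Z → K) (t' : X' → Y' → Z' → K) :
    flatRank K (tensorDirectSum t t') = flatRank K t + flatRank K t' := by
  apply le_antisymm
  · exact flatRank_le ((hasFlatRankLE_flatRank t).directSum (hasFlatRankLE_flatRank t'))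
  · obtain ⟨ℓ₁, ℓ₂, h₁, h₂, hℓ⟩ :=
      (hasFlatRankLE_flatRank (tensorDirectSum t t')).exists_of_directSum
    exact (add_le_add (flatRank_le h₁) (flatRank_le h₂)).trans hℓ
end

section
/- The flat rank and slice rank of the n × n matrix multiplication tensor ⟨n,n,n⟩ are both equal to n^2. -/
/-!
Contracting `⟨n,n,n⟩` with `v ∈ M_n(F)` gives, up to a permutation of the columns, the
Kronecker product `vᵀ ⊗ 1`, of rank `n · rank v`. So if all contractions with a subspace `V`
have rank at most `r`, then `V` consists of matrices of rank at most `r / n`, Flanders' theorem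
gives `dim V ≤ r`, and `r + codim V ≥ n²`. Slice rank dominates flat rank: slices in the first two
factors contract to rank-one matrices, and slices in the third are killed by a subspace of
codimension at most their number. Slicing along the first factor gives slice rank at most `n²`.

Flanders' theorem is proved over an arbitrary field. The first nonzero entries (in lexicographic
order) of the elements of `V` occupy at least `dim V` cells. If there are more than `s·m` of them,
some wrapped diagonal `{(i, i + k)}` carries `s + 1`, and some combination of matrices of `V`
with these leading cells has an invertible minor on their rows and columns. To find it, the rows
of the minor are switched one at a time from the leading rows of the chosen matrices (a
triangular, invertible start) to those of the combination: the determinant is affine in the one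
new coefficient, with nonzero slope, so `0` or `1` keeps it nonzero.
-/

open Module Finset Matrix
open scoped Kronecker

namespace Matrix

variable {K : Type*} [Field K]

theorem rank_add_le_s16 {m n : Type*} [Fintype n] (A B : Matrix m n K) :
    (A + B).rank ≤ A.rank + B.rank := by
  rw [rank, rank, rank, mulVecLin_add]
  exact (Submodule.finrank_mono (LinearMap.range_add_le _ _)).trans
    (Submodule.finrank_add_le_finrank_add_finrank _ _)

theorem rank_sum_le {m n ι : Type*} [Fintype n] (s : Finset ι) (A : ι → Matrix m n K) :
    (∑ i ∈ s, A i).rank ≤ ∑ i ∈ s, (A i).rank := by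
  classical
  induction s using Finset.induction with
  | empty => simp
  | insert i s hi ih =>
    rw [sum_insert hi, sum_insert hi]
    exact (rank_add_le_s16 _ _).trans (by omega)

variable {m n : Type*} [Fintype m] [Fintype n] [DecidableEq m] [DecidableEq n]

theorem rank_mul_mul_of_isUnit {P : Matrix m m K} {Q : Matrix n n K} (hP : IsUnit P)
    (hQ : IsUnit Q) (A : Matrix m n K) : (P * A * Q).rank = A.rank := by
  rw [rank_mul_eq_left_of_isUnit_det _ _ ((isUnit_iff_isUnit_det _).1 hQ),
    rank_mul_eq_right_of_isUnit_det _ _ ((isUnit_iff_isUnit_det _).1 hP)]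

theorem exists_isUnit_mul_mul_eq_diagonal (A : Matrix m m K) :
    ∃ (P Q : Matrix m m K) (w : m → K), IsUnit P ∧ IsUnit Q ∧ P * A * Q = diagonal w := by
  obtain ⟨P, Q, e, hP, hQ, h⟩ := exists_rank_normal_form A
  refine ⟨P, Q, Sum.elim 1 0 ∘ e, hP, hQ, ?_⟩
  rw [h, ← diagonal_one, ← diagonal_zero, fromBlocks_diagonal, submatrix_diagonal_equiv]
  rfl

theorem rank_kronecker (A : Matrix m m K) (B : Matrix n n K) :
    (A ⊗ₖ B).rank = A.rank * B.rank := by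
  classical
  obtain ⟨P, Q, v, hP, hQ, hA⟩ := exists_isUnit_mul_mul_eq_diagonal A
  obtain ⟨P', Q', w, hP', hQ', hB⟩ := exists_isUnit_mul_mul_eq_diagonal B
  rw [← rank_mul_mul_of_isUnit hP hQ, ← rank_mul_mul_of_isUnit hP' hQ',
    ← rank_mul_mul_of_isUnit (IsUnit.kronecker hP hP') (IsUnit.kronecker hQ hQ'),
    ← mul_kronecker_mul, ← mul_kronecker_mul, hA, hB, diagonal_kronecker_diagonal, rank_diagonal,
    rank_diagonal, rank_diagonal, ← Fintype.card_prod]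
  exact Fintype.card_congr <| (Equiv.subtypeEquivRight fun _ => mul_ne_zero_iff).trans
    (Equiv.subtypeProdEquivProd (p := fun i => v i ≠ 0) (q := fun j => w j ≠ 0))

theorem det_ne_zero_of_blockTriangular {ι α : Type*} [Fintype ι] [DecidableEq ι] [LinearOrder α]
    {M : Matrix ι ι K} {b : ι → α} (hM : M.BlockTriangular b) (hb : Function.Injective b)
    (hdiag : ∀ i, M i i ≠ 0) : M.det ≠ 0 := by
  let : LinearOrder ι := LinearOrder.lift' b hb
  rw [det_of_isUpperTriangular hM]
  exact prod_ne_zero_iff.2 fun i _ => hdiag i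

theorem exists_det_updateRow_smul_add_ne_zero {ι : Type*} [Fintype ι] [DecidableEq ι]
    {M : Matrix ι ι K} (hM : M.det ≠ 0) (j : ι) (r : ι → K) :
    ∃ x : K, (M.updateRow j (x • M j + r)).det ≠ 0 := by
  have hdet (x : K) : (M.updateRow j (x • M j + r)).det = x * M.det + (M.updateRow j r).det := by
    rw [det_updateRow_add, det_updateRow_smul, updateRow_eq_self]
  by_cases h : (M.updateRow j r).det = 0
  · exact ⟨1, by rwa [hdet, h, one_mul, add_zero]⟩
  · exact ⟨0, by rwa [hdet, zero_mul, zero_add]⟩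

theorem exists_det_sum_smul_ne_zero {ι : Type*} [Fintype ι] [DecidableEq ι] [LinearOrder ι]
    (C : ι → Matrix ι ι K) (hC : ∀ a k, k < a → C a k = 0)
    (hdiag : (Matrix.of fun k => C k k).det ≠ 0) :
    ∃ c : ι → K, (∑ a, c a • C a).det ≠ 0 := by
  let N (S : Finset ι) (c : ι → K) : Matrix ι ι K :=
    Matrix.of fun k => if k ∈ S then (∑ a, c a • C a) k else C k k
  suffices ∀ S, ∃ c, (N S c).det ≠ 0 by
    obtain ⟨c, hc⟩ := this univ
    refine ⟨c, ?_⟩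
    convert hc using 2
    ext k l
    simp [N]
  intro S
  induction S using Finset.induction_on_max with
  | empty => exact ⟨0, by simpa [N] using hdiag⟩
  | insert j S hS ih =>
    obtain ⟨c, hc⟩ := ih
    obtain ⟨x, hx⟩ := exists_det_updateRow_smul_add_ne_zero hc j ((∑ a, c a • C a) j)
    -- adding `x • C j` only changes row `j`, since `C j` vanishes on the rows of `S`
    refine ⟨c + Pi.single j x, ?_⟩
    have hsum : ∑ a, (c + Pi.single j x : ι → K) a • C a = ∑ a, c a • C a + x • C j := by
      simp [add_smul, sum_add_distrib, Pi.single_apply, ite_smul]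
    have hjS : j ∉ S := fun h => (hS j h).false
    convert hx using 2
    ext k l
    simp only [N, hsum]
    rcases eq_or_ne k j with rfl | hk
    · simp [hjS, add_comm]
    · by_cases hkS : k ∈ S
      · simp [hk, hkS, hC j k (hS k hkS)]
      · simp [hk, hkS]

theorem exists_card_le_rank_sum_smul {ρ γ : Type*} [Fintype γ] [LinearOrder ρ] [LinearOrder γ]
    (R : Finset ρ) (col : ρ → γ) (hcol : Set.InjOn col R)
    (B : ρ → Matrix ρ γ K) (hpiv : ∀ i ∈ R, B i i (col i) ≠ 0)
    (habove : ∀ i ∈ R, ∀ i' < i, B i i' = 0) (hleft : ∀ i ∈ R, ∀ j < col i, B i i j = 0) :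
    ∃ c : R → K, #R ≤ (∑ i : R, c i • B i).rank := by
  classical
  let C (a : R) : Matrix R R K := (B a).submatrix (↑) (col ∘ (↑))
  have hP : (Matrix.of fun k => C k k).det ≠ 0 := by
    refine det_ne_zero_of_blockTriangular (b := col ∘ (↑)) (fun k l hlk => ?_)
      hcol.injective (fun k => hpiv k k.2)
    exact hleft k k.2 _ hlk
  obtain ⟨c, hc⟩ := exists_det_sum_smul_ne_zero C
    (fun a k hk => funext fun l => congrFun (habove a a.2 k hk) _) hP
  refine ⟨c, ?_⟩
  have hsub : ∑ a, c a • C a = (∑ i : R, c i • B i).submatrix (↑) (col ∘ (↑)) := by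
    ext k l
    simp [C, sum_apply]
  calc #R = (∑ a, c a • C a).rank := by rw [rank_of_det_ne_zero hc, Fintype.card_coe]
    _ ≤ _ := hsub ▸ rank_submatrix_le _ _ _

end Matrix

section LeadingIndex

variable {K ι : Type*} [Field K] [Fintype ι] [LinearOrder ι]

def Submodule.IsLeadingIndex (V : Submodule K (ι → K)) (i : ι) : Prop :=
  ∃ v ∈ V, v i ≠ 0 ∧ ∀ j < i, v j = 0

theorem Submodule.finrank_le_card_isLeadingIndex (V : Submodule K (ι → K)) :
    finrank K V ≤ Nat.card {i // V.IsLeadingIndex i} := by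
  classical
  let restrict : V →ₗ[K] ({i // V.IsLeadingIndex i} → K) :=
    LinearMap.pi fun i => (LinearMap.proj i.1).comp V.subtype
  rw [Nat.card_eq_fintype_card, ← Module.finrank_fintype_fun_eq_card K]
  refine LinearMap.finrank_le_finrank_of_injective (f := restrict) <|
    LinearMap.ker_eq_bot.1 <| LinearMap.ker_eq_bot'.2 fun v hv => ?_
  by_contra hne
  obtain ⟨j, hj⟩ : ∃ j, (v : ι → K) j ≠ 0 := by
    by_contra! h
    exact hne (Subtype.ext (funext h))
  obtain ⟨i, hi, hmin⟩ := wellFounded_lt.has_min {j | (v : ι → K) j ≠ 0} ⟨j, hj⟩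
  have hlead : V.IsLeadingIndex i := ⟨v, v.2, hi, fun j hj => by
    by_contra h
    exact hmin j h hj⟩
  exact hi (congrFun hv ⟨i, hlead⟩)

end LeadingIndex

theorem Fin.exists_lt_card_diagonal {m s : ℕ} [NeZero m] (S : Finset (Fin m × Fin m))
    (hS : s * m < #S) : ∃ k : Fin m, s < #{i | (i, i + k) ∈ S} := by
  obtain ⟨k, -, hk⟩ := exists_lt_card_fiber_of_mul_lt_card_of_maps_to (s := S)
    (f := fun c : Fin m × Fin m => c.2 - c.1) (t := univ) (fun _ _ => mem_univ _)
    (by rwa [card_univ, Fintype.card_fin, mul_comm])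
  refine ⟨k, hk.trans_le (card_le_card_of_injOn Prod.fst (fun c hc => ?_) fun c hc d hd h => ?_)⟩
  · simp only [coe_filter, Set.mem_ofPred_eq, sub_eq_iff_eq_add'] at hc ⊢
    exact ⟨mem_univ _, hc.2 ▸ hc.1⟩
  · simp only [coe_filter, Set.mem_ofPred_eq, sub_eq_iff_eq_add'] at hc hd
    exact Prod.ext h (by rw [hc.2, hd.2, h])

theorem Matrix.finrank_le_mul_of_forall_rank_le {K : Type*} [Field K] {m s : ℕ}
    (V : Submodule K (Matrix (Fin m) (Fin m) K)) (hV : ∀ A ∈ V, A.rank ≤ s) :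
    finrank K V ≤ s * m := by
  classical
  rcases Nat.eq_zero_or_pos m with rfl | hm
  · simp [Subsingleton.elim V ⊥]
  have : NeZero m := ⟨hm.ne'⟩
  by_contra! hlt
  let e : Matrix (Fin m) (Fin m) K ≃ₗ[K] (Fin m ×ₗ Fin m → K) :=
    (Matrix.ofLinearEquiv K).symm ≪≫ₗ (LinearEquiv.curry K K _ _).symm ≪≫ₗ
      LinearEquiv.funCongrLeft K K ofLex
  let W := V.map e.toLinearMap
  let S : Finset (Fin m × Fin m) := {c | W.IsLeadingIndex (toLex c)}
  have hS : s * m < #S := by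
    calc s * m < finrank K V := hlt
      _ = finrank K W := (e.finrank_map_eq V).symm
      _ ≤ Nat.card {i // W.IsLeadingIndex i} := W.finrank_le_card_isLeadingIndex
      _ = Nat.card {c : Fin m × Fin m // W.IsLeadingIndex (toLex c)} :=
        (Nat.card_congr (toLex.subtypeEquiv fun _ => Iff.rfl)).symm
      _ = #S := by rw [Nat.card_eq_fintype_card, Fintype.card_subtype]
  obtain ⟨k, hk⟩ := Fin.exists_lt_card_diagonal S hS
  have hpiv : ∀ i ∈ ({i | (i, i + k) ∈ S} : Finset (Fin m)), ∃ A ∈ V, A i (i + k) ≠ 0 ∧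
      ∀ c : Fin m × Fin m, toLex c < toLex (i, i + k) → A c.1 c.2 = 0 := by
    intro i hi
    obtain ⟨w, ⟨A, hA, rfl⟩, hpiv, hlead⟩ := (mem_filter.1 (mem_filter.1 hi).2).2
    exact ⟨A, hA, hpiv, fun c hc => hlead _ hc⟩
  choose! A hAV hApiv hAlead using hpiv
  obtain ⟨c, hc⟩ := exists_card_le_rank_sum_smul _ (· + k) (add_left_injective k).injOn A hApiv
    (fun i hi i' hi' => funext fun j =>
      hAlead i hi (i', j) (Prod.Lex.toLex_lt_toLex.2 (Or.inl hi')))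
    (fun i hi j hj => hAlead i hi (i, j) (Prod.Lex.toLex_lt_toLex.2 (Or.inr ⟨rfl, hj⟩)))
  exact (hk.trans_le hc).not_ge (hV _ (V.sum_mem fun i _ => V.smul_mem (c i) (hAV i i.2)))

section Contraction

variable {K : Type*} [Field K] {X Y Z : Type*} [Fintype Z]

theorem contractZ_sum {ι : Type*} (s : Finset ι) (T : ι → X → Y → Z → K) (v : Z → K) :
    contractZ (fun x y z => ∑ i ∈ s, T i x y z) v = ∑ i ∈ s, contractZ (T i) v := by
  ext x y
  simp only [contractZ, of_apply, Matrix.sum_apply, sum_mul]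
  exact sum_comm

theorem rank_contractZ_mul_left [Fintype Y] (f : X → K) (g : Y → Z → K) (v : Z → K) :
    (contractZ (fun x y z => f x * g y z) v).rank ≤ 1 := by
  convert rank_vecMulVec_le f fun y => ∑ z, g y z * v z
  ext x y
  simp [contractZ, vecMulVec_apply, mul_sum, mul_assoc]

theorem rank_contractZ_mul_middle [Fintype Y] (f : Y → K) (g : X → Z → K) (v : Z → K) :
    (contractZ (fun x y z => f y * g x z) v).rank ≤ 1 := by
  convert rank_vecMulVec_le (fun x => ∑ z, g x z * v z) f
  ext x y
  simp [contractZ, vecMulVec_apply, mul_sum, mul_comm, mul_left_comm]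

theorem contractZ_mul_right (f : Z → K) (g : X → Y → K) (v : Z → K) :
    contractZ (fun x y z => f z * g x y) v = (f ⬝ᵥ v) • Matrix.of g := by
  ext x y
  simp [contractZ, dotProduct, mul_sum, mul_comm, mul_left_comm]

end Contraction

theorem HasSliceRankLE.hasFlatRankLE {K X Y Z : Type*} [Field K] [Fintype X] [Fintype Y]
    [Fintype Z] {F : X → Y → Z → K} {r : ℕ} (h : HasSliceRankLE K F r) : HasFlatRankLE K F r := by
  classical
  obtain ⟨T, hT, hF⟩ := h
  let I : Finset (Fin r) := {i | ∃ (f : Z → K) (g : X → Y → K), T i = fun x y z => f z * g x y}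
  choose! f g hfg using fun i (hi : i ∈ I) => (mem_filter.1 hi).2
  let φ := (Matrix.of fun i : I => f i).mulVecLin
  refine ⟨LinearMap.ker φ, #Iᶜ, fun v hv => ?_, ?_⟩
  · have hI : ∑ i ∈ I, contractZ (T i) v = 0 := sum_eq_zero fun i hi => by
      rw [hfg i hi, contractZ_mul_right, show f i ⬝ᵥ v = 0 from congrFun hv ⟨i, hi⟩, zero_smul]
    rw [show F = fun x y z => ∑ i, T i x y z from funext₃ hF, contractZ_sum,
      ← sum_compl_add_sum I, hI, add_zero, card_eq_sum_ones]
    refine (rank_sum_le _ _).trans (sum_le_sum fun i hi => ?_)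
    rcases hT i with ⟨f, g, h⟩ | ⟨f, g, h⟩ | h
    · exact h ▸ rank_contractZ_mul_left f g v
    · exact h ▸ rank_contractZ_mul_middle f g v
    · exact (mem_compl.1 hi (mem_filter.2 ⟨mem_univ i, h⟩)).elim
  · have hrange : finrank K (LinearMap.range φ) ≤ #I :=
      (rank_le_card_height _).trans_eq (Fintype.card_coe I)
    have := LinearMap.finrank_range_add_finrank_ker φ
    have := card_compl_add_card I
    rw [Module.finrank_fintype_fun_eq_card] at *
    simp only [Fintype.card_fin] at *
    omega

theorem hasSliceRankLE_card {K X Y Z : Type*} [Field K] [Fintype X] (F : X → Y → Z → K) :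
    HasSliceRankLE K F (Fintype.card X) := by
  classical
  let e := (Fintype.equivFin X).symm
  refine ⟨fun i x y z => (if x = e i then 1 else 0) * F (e i) y z,
    fun i => Or.inl ⟨_, _, rfl⟩, fun x y z => ?_⟩
  rw [e.sum_comp fun x' => (if x = x' then 1 else 0) * F x' y z]
  simp

def matmulTensor (K : Type*) [Zero K] [One K] (n : ℕ) :
    Fin n × Fin n → Fin n × Fin n → Fin n × Fin n → K :=
  fun p q r => if p.2 = q.1 ∧ q.2 = r.1 ∧ r.2 = p.1 then 1 else 0

section MatrixMultiplication

variable {K : Type*} [Field K] {n : ℕ}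

theorem contractZ_matmulTensor (v : Fin n × Fin n → K) :
    contractZ (matmulTensor K n) v =
      ((Matrix.of fun a b => v (b, a)) ⊗ₖ (1 : Matrix (Fin n) (Fin n) K)).submatrix id
        Prod.swap := by
  ext p q
  rw [contractZ, of_apply, Fintype.sum_eq_single (q.2, p.1) fun z hz => ?_]
  · by_cases h : p.2 = q.1 <;> simp [matmulTensor, one_apply, h]
  · simp only [matmulTensor, ite_mul, one_mul, zero_mul, ite_eq_right_iff]
    exact fun ⟨_, h₁, h₂⟩ => absurd (Prod.ext h₁.symm h₂) hz

theorem rank_contractZ_matmulTensor (v : Fin n × Fin n → K) :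
    (contractZ (matmulTensor K n) v).rank = (Matrix.of fun a b => v (a, b)).rank * n := by
  rw [contractZ_matmulTensor]
  calc _ = ((Matrix.of fun a b => v (b, a)) ⊗ₖ (1 : Matrix (Fin n) (Fin n) K)).rank :=
        rank_submatrix _ (Equiv.refl _) (Equiv.prodComm _ _)
    _ = _ := by
      rw [rank_kronecker, rank_one, Fintype.card_fin, ← rank_transpose]
      rfl

theorem sq_le_of_hasFlatRankLE_matmulTensor {ℓ : ℕ} (h : HasFlatRankLE K (matmulTensor K n) ℓ) :
    n ^ 2 ≤ ℓ := by
  obtain ⟨V, r, hrank, hℓ⟩ := h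
  rcases n.eq_zero_or_pos with rfl | hn
  · simp
  let e : (Fin n × Fin n → K) ≃ₗ[K] Matrix (Fin n) (Fin n) K :=
    LinearEquiv.curry K K _ _ ≪≫ₗ Matrix.ofLinearEquiv K
  have hflanders : finrank K (V.map e.toLinearMap) ≤ r / n * n := by
    refine finrank_le_mul_of_forall_rank_le _ ?_
    rintro - ⟨v, hv, rfl⟩
    rw [Nat.le_div_iff_mul_le hn]
    exact (rank_contractZ_matmulTensor v).symm.trans_le (hrank v hv)
  rw [e.finrank_map_eq] at hflanders
  have := Nat.div_mul_le_self r n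
  rw [Fintype.card_prod, Fintype.card_fin] at hℓ
  rw [sq]
  omega

end MatrixMultiplication

/-- The flat rank and slice rank of the `n × n` matrix multiplication tensor
`⟨n,n,n⟩` (in the basis of matrix units) are both `n^2`. -/
theorem flatRank_sliceRank_matmul {K : Type*} [Field K] (n : ℕ) :
    flatRank K (fun p q r : Fin n × Fin n =>
      if p.2 = q.1 ∧ q.2 = r.1 ∧ r.2 = p.1 then (1 : K) else 0) = n ^ 2 ∧
    sliceRank K (fun p q r : Fin n × Fin n =>
      if p.2 = q.1 ∧ q.2 = r.1 ∧ r.2 = p.1 then (1 : K) else 0) = n ^ 2 := by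
  change flatRank K (matmulTensor K n) = n ^ 2 ∧ sliceRank K (matmulTensor K n) = n ^ 2
  have hlower (ℓ : ℕ) (h : HasFlatRankLE K (matmulTensor K n) ℓ) : n ^ 2 ≤ ℓ :=
    sq_le_of_hasFlatRankLE_matmulTensor h
  have hslice : HasSliceRankLE K (matmulTensor K n) (n ^ 2) := by
    simpa [sq] using hasSliceRankLE_card (matmulTensor K n)
  have hflat := hslice.hasFlatRankLE
  exact ⟨le_antisymm (Nat.sInf_le hflat) (le_csInf ⟨_, hflat⟩ hlower),
    le_antisymm (Nat.sInf_le hslice) (le_csInf ⟨_, hslice⟩ fun ℓ h => hlower ℓ h.hasFlatRankLE)⟩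
end

section
/- Let p be prime and G = Z/p^r Z. The flat rank of the multiplication tensor of the group algebra F_p[G] equals |G| = p^r. -/
open Module LinearMap

@[simp]
theorem contractZ_zero {K X Y Z : Type*} [Field K] [Fintype Z] (t : X → Y → Z → K) :
    contractZ t 0 = 0 := by
  ext
  simp [contractZ]

section LinearAlgebra

variable {K V W U : Type*} [Field K] [AddCommGroup V] [Module K V] [AddCommGroup W] [Module K W]
  [AddCommGroup U] [Module K U] [FiniteDimensional K V]

theorem LinearMap.finrank_ker_comp_le [FiniteDimensional K W] (f : V →ₗ[K] W)
    (g : W →ₗ[K] U) :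
    finrank K (ker (g ∘ₗ f)) ≤ finrank K (ker g) + finrank K (ker f) := by
  let f' : ker (g ∘ₗ f) →ₗ[K] ker g := f.restrict fun _ hx ↦ hx
  have hker : finrank K (ker f') ≤ finrank K (ker f) := by
    refine finrank_le_finrank_of_injective (f := ((ker (g ∘ₗ f)).subtype ∘ₗ
      (ker f').subtype).codRestrict (ker f) fun x ↦ congrArg Subtype.val (mem_ker.1 x.2)) ?_
    exact (injective_codRestrict_iff _).2
      ((ker (g ∘ₗ f)).injective_subtype.comp (ker f').injective_subtype)
  have := finrank_range_add_finrank_ker f'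
  have := Submodule.finrank_le (range f')
  omega

theorem Module.End.finrank_ker_pow_le (f : End K V) (k : ℕ) :
    finrank K (ker (f ^ k)) ≤ k * finrank K (ker f) := by
  induction k with
  | zero => simp [Module.End.one_eq_id]
  | succ k ih =>
    rw [pow_succ, Module.End.mul_eq_comp, Nat.succ_mul]
    have := finrank_ker_comp_le f (f ^ k)
    omega

theorem Module.End.pow_finrank_eq_zero_of_isNilpotent {f : End K V} (hf : IsNilpotent f) :
    f ^ finrank K V = 0 := by
  simpa [hf.charpoly_eq_X_pow_finrank] using f.aeval_self_charpoly

end LinearAlgebra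

theorem IsNilpotent.pow_mul_eq_zero_of_finrank_range_mulLeft_le {K A : Type*} [Field K]
    [CommRing A] [Algebra K A] [FiniteDimensional K A] {t a : A} (ht : IsNilpotent t) {R : ℕ}
    (hR : finrank K (range (mulLeft K a)) ≤ R) : t ^ R * a = 0 := by
  have hmaps : Set.MapsTo (mulLeft K t) (range (mulLeft K a)) (range (mulLeft K a)) := by
    rintro _ ⟨b, rfl⟩
    exact ⟨t * b, by simp [mul_left_comm]⟩
  have hnil := Module.End.isNilpotent.restrict hmaps ((isNilpotent_mulLeft_iff K t).2 ht)
  have hzero := congrArg (fun φ ↦ (φ ⟨a, 1, mul_one a⟩ : A))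
    (Module.End.pow_finrank_eq_zero_of_isNilpotent hnil)
  simp only [Module.End.pow_restrict _ hmaps, restrict_apply, pow_mulLeft, mulLeft_apply,
    LinearMap.zero_apply, ZeroMemClass.coe_zero] at hzero
  rw [← Nat.sub_add_cancel hR, pow_add, mul_assoc, hzero, mul_zero]

theorem sub_one_pow_char_pow_eq_zero {A : Type*} [CommRing A] {p : ℕ} [Fact p.Prime] [CharP A p]
    {x : A} {r : ℕ} (hx : x ^ p ^ r = 1) : (x - 1) ^ p ^ r = 0 := by
  rw [sub_pow_char_pow, hx, one_pow, sub_self]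

namespace AddMonoidAlgebra

variable {K : Type*} [Field K]

theorem rank_contractZ_eq_finrank_range_mulLeft {G : Type*} [AddCommGroup G] [Fintype G]
    [DecidableEq G] (v : G → K) :
    (contractZ (fun g h k : G => if g + h = k then (1 : K) else 0) v).rank =
      finrank K (range (mulLeft K ((basis G K).equivFun.symm v))) := by
  let b := (basis G K).reindex (Equiv.neg G)
  suffices Matrix.toLin b (basis G K)
      (contractZ (fun g h k : G => if g + h = k then (1 : K) else 0) v) =
        mulLeft K ((basis G K).equivFun.symm v) by
    rw [Matrix.rank_eq_finrank_range_toLin _ (basis G K) b, this]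
  refine b.ext fun h ↦ ?_
  rw [Matrix.toLin_self]
  ext k
  simp [b, contractZ, Finsupp.single_apply]

theorem finrank_ker_mulLeft_single_one_sub_one_le (n : ℕ) [NeZero n] :
    finrank K (ker (mulLeft K (single (1 : ZMod n) (1 : K) - 1))) ≤ 1 := by
  let κ := ker (mulLeft K (single (1 : ZMod n) (1 : K) - 1))
  suffices Function.Injective ((basis (ZMod n) K).coord 0 ∘ₗ κ.subtype) by
    simpa using finrank_le_finrank_of_injective this
  refine (injective_iff_map_eq_zero _).2 fun ⟨a, ha⟩ h0 ↦ ?_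
  replace ha : single 1 1 * a = a := by
    simpa [κ, sub_mul, sub_eq_zero] using ha
  have hshift (g : ZMod n) : a.coeff (1 + g) = a.coeff g := by
    simpa using (congrArg (coeff · (1 + g)) ha).symm
  have hnat (m : ℕ) : a.coeff (m : ZMod n) = 0 := by
    induction m with
    | zero => rw [Nat.cast_zero]; exact h0
    | succ m ih => rw [Nat.cast_succ, add_comm, hshift, ih]
  ext g
  simpa using hnat g.val

theorem isNilpotent_single_one_sub_one (p r : ℕ) [Fact p.Prime] [CharP K p] :
    IsNilpotent (single (1 : ZMod (p ^ r)) (1 : K) - 1) := by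
  have : CharP K[ZMod (p ^ r)] p := charP_of_injective_algebraMap' K p
  exact ⟨p ^ r, sub_one_pow_char_pow_eq_zero (by simp [single_pow, one_def])⟩

theorem finrank_le_of_forall_rank_contractZ_le {p r : ℕ} [Fact p.Prime] [CharP K p]
    [NeZero (p ^ r)] (V : Submodule K (ZMod (p ^ r) → K)) {R : ℕ}
    (hV : ∀ v ∈ V,
      (contractZ (fun g h k : ZMod (p ^ r) => if g + h = k then (1 : K) else 0) v).rank ≤ R) :
    finrank K V ≤ R := by
  let e := (basis (ZMod (p ^ r)) K).equivFun.symm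
  let eₗ : (ZMod (p ^ r) → K) →ₗ[K] K[ZMod (p ^ r)] := e
  let t := single (1 : ZMod (p ^ r)) (1 : K) - 1
  have hVker : V.map eₗ ≤ ker (mulLeft K t ^ R) := by
    rintro _ ⟨v, hv, rfl⟩
    rw [mem_ker, pow_mulLeft, mulLeft_apply]
    exact (isNilpotent_single_one_sub_one p r).pow_mul_eq_zero_of_finrank_range_mulLeft_le
      ((rank_contractZ_eq_finrank_range_mulLeft v).symm.trans_le (hV v hv))
  calc finrank K V = finrank K (V.map eₗ) :=
        (LinearEquiv.finrank_map_eq e V).symm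
    _ ≤ finrank K (ker (mulLeft K t ^ R)) := Submodule.finrank_mono hVker
    _ ≤ R * finrank K (ker (mulLeft K t)) := Module.End.finrank_ker_pow_le _ _
    _ ≤ R := by
      simpa using Nat.mul_le_mul_left R (finrank_ker_mulLeft_single_one_sub_one_le (p ^ r))

end AddMonoidAlgebra

theorem hasFlatRankLE_card {K X Y Z : Type*} [Field K] [Fintype X] [Fintype Y] [Fintype Z]
    (t : X → Y → Z → K) : HasFlatRankLE K t (Fintype.card Z) :=
  ⟨⊥, 0, fun v hv ↦ by simp [(Submodule.mem_bot _).1 hv], by simp⟩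

/-- For `G = Z/p^r Z` (written additively), the flat rank of the
multiplication tensor of the group algebra `F_p[G]` (in the group-element
basis) equals `|G| = p^r`. -/
theorem flatRank_cyclic_pGroup (p r : ℕ) [hp : Fact p.Prime] [NeZero (p ^ r)] :
    flatRank (ZMod p)
      (fun g h k : ZMod (p ^ r) => if g + h = k then (1 : ZMod p) else 0) =
      p ^ r := by
  have hupper := hasFlatRankLE_card (K := ZMod p)
    (fun g h k : ZMod (p ^ r) => if g + h = k then (1 : ZMod p) else 0)
  rw [ZMod.card] at hupper
  refine le_antisymm (Nat.sInf_le hupper) (le_csInf ⟨_, hupper⟩ ?_)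
  rintro ℓ ⟨V, R, hV, hℓ⟩
  have := AddMonoidAlgebra.finrank_le_of_forall_rank_contractZ_le V hV
  rw [ZMod.card] at hℓ
  omega
end

section
/- For any cyclic group G = Z/nZ and any field F, the slice rank of the multiplication tensor of G over F equals |G| = n. -/
open Finset Module Polynomial

section

variable {K : Type*} [Field K]

theorem Matrix.rank_le_card_of_eq_sum_mul {m n ι : Type*} [Fintype n] (M : Matrix m n K)
    (s : Finset ι) (c : ι → m → K) (u : ι → n → K)
    (hM : ∀ y z, M y z = ∑ i ∈ s, c i y * u i z) : M.rank ≤ #s := by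
  have hfac : M = Matrix.of (fun y (i : s) => c i y) * Matrix.of (fun (i : s) z => u i z) := by
    ext y z
    simp only [Matrix.mul_apply, Matrix.of_apply, hM]
    exact (Finset.sum_coe_sort s _).symm
  calc M.rank ≤ (Matrix.of fun y (i : s) => c i y).rank := hfac ▸ Matrix.rank_mul_le_left _ _
    _ ≤ #s := (Matrix.rank_le_card_width _).trans_eq (Fintype.card_coe s)

section Contraction

variable {X Y Z : Type*} [Fintype X]

theorem exists_sum_mul_eq_mul_of_slice {t : X → Y → Z → K}
    (ht : (∃ (f : Y → K) (g : X → Z → K), t = fun x y z => f y * g x z) ∨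
      (∃ (f : Z → K) (g : X → Y → K), t = fun x y z => f z * g x y)) (v : X → K) :
    ∃ (c : Y → K) (u : Z → K), ∀ y z, ∑ x, v x * t x y z = c y * u z := by
  rcases ht with ⟨f, g, rfl⟩ | ⟨f, g, rfl⟩
  · refine ⟨f, fun z => ∑ x, v x * g x z, fun y z => ?_⟩
    simp only [Finset.mul_sum]
    exact Finset.sum_congr rfl fun x _ => by ring
  · refine ⟨fun y => ∑ x, v x * g x y, f, fun y z => ?_⟩
    simp only [Finset.sum_mul]
    exact Finset.sum_congr rfl fun x _ => by ring

theorem HasSliceRankLE.exists_rank_contract_le [Fintype Z] {F : X → Y → Z → K} {r : ℕ}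
    (hF : HasSliceRankLE K F r) :
    ∃ (S : Finset (Fin r)) (f : Fin r → X → K), ∀ v : X → K, (∀ i ∈ S, ∑ x, v x * f i x = 0) →
      (Matrix.of fun y z => ∑ x, v x * F x y z).rank ≤ #Sᶜ := by
  classical
  obtain ⟨T, hT, hsum⟩ := hF
  have hkind : ∀ i, ∃ f : X → K, (∃ g : Y → Z → K, T i = fun x y z => f x * g y z) ∨
      ∀ v : X → K, ∃ (c : Y → K) (u : Z → K), ∀ y z, ∑ x, v x * T i x y z = c y * u z := by
    intro i
    rcases hT i with ⟨f, hf⟩ | hrest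
    · exact ⟨f, Or.inl hf⟩
    · exact ⟨0, Or.inr (exists_sum_mul_eq_mul_of_slice hrest)⟩
  choose f hf using hkind
  set S := univ.filter fun i => ∃ g : Y → Z → K, T i = fun x y z => f i x * g y z
  refine ⟨S, f, fun v hv => ?_⟩
  have hfirst : ∀ i ∈ S, ∀ y z, ∑ x, v x * T i x y z = 0 := by
    intro i hi y z
    obtain ⟨g, hg⟩ := (Finset.mem_filter.mp hi).2
    simp only [hg, ← mul_assoc, ← Finset.sum_mul, hv i hi, zero_mul]
  have hrest : ∀ i ∈ Sᶜ, ∃ (c : Y → K) (u : Z → K), ∀ y z, ∑ x, v x * T i x y z = c y * u z :=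
    fun i hi => (hf i).resolve_left (by simpa [S] using hi) v
  choose! c u hcu using hrest
  refine Matrix.rank_le_card_of_eq_sum_mul _ _ c u fun y z => ?_
  rw [Matrix.of_apply]
  simp_rw [hsum, Finset.mul_sum]
  rw [Finset.sum_comm, ← Finset.sum_add_sum_compl S, Finset.sum_eq_zero
    fun i hi => hfirst i hi y z, zero_add]
  exact Finset.sum_congr rfl fun i hi => hcu i hi y z

end Contraction

section AddTensor

variable (K) (G : Type*) [AddGroup G] [DecidableEq G]

def addTensor : G → G → G → K := fun g h k => if g + h = k then 1 else 0

variable {K G} [Fintype G]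

theorem sum_mul_addTensor (v : G → K) (y z : G) :
    ∑ x, v x * addTensor K G x y z = v (z - y) := by
  simp [addTensor, ← eq_sub_iff_add_eq]

theorem hasSliceRankLE_addTensor : HasSliceRankLE K (addTensor K G) (Fintype.card G) := by
  let e := (Fintype.equivFin G).symm
  refine ⟨fun i x y z => (if z = e i then 1 else 0) * (if x + y = e i then 1 else 0),
    fun i => Or.inr (Or.inr ⟨_, _, rfl⟩), fun x y z => ?_⟩
  rw [e.sum_comp (fun k => (if z = k then (1 : K) else 0) * (if x + y = k then 1 else 0))]
  simp [addTensor, eq_comm]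

end AddTensor

theorem Polynomial.exists_ne_zero_degree_lt_forall_eq_zero {ι : Type*} [Fintype ι]
    (φ : ι → K[X] →ₗ[K] K) {m : ℕ} (hm : Fintype.card ι < m) :
    ∃ p : K[X], p ≠ 0 ∧ p.degree < m ∧ ∀ i, φ i p = 0 := by
  let Φ : degreeLT K m →ₗ[K] ι → K := LinearMap.pi fun i => φ i ∘ₗ (degreeLT K m).subtype
  have hfin : finrank K (ι → K) < finrank K (degreeLT K m) := by
    rwa [(degreeLTEquiv K m).finrank_eq, finrank_fin_fun, finrank_fintype_fun_eq_card]
  obtain ⟨⟨p, hpm⟩, hp, hp0⟩ := Submodule.exists_mem_ne_zero_of_ne_bot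
    (LinearMap.ker_ne_bot_of_finrank_lt (f := Φ) hfin)
  exact ⟨p, by simpa using hp0, mem_degreeLT.mp hpm, fun i => congrFun (LinearMap.mem_ker.mp hp) i⟩

theorem Polynomial.sub_natDegree_le_rank_coeff_sub {n : ℕ} [NeZero n] {p : K[X]} (hp : p ≠ 0)
    (hpn : p.natDegree < n) :
    n - p.natDegree ≤ (Matrix.of fun y z : ZMod n => p.coeff (z - y).val).rank := by
  set d := p.natDegree
  -- rows `k`, columns `d + j`: the entry `p.coeff (d + j - k)` vanishes for `k < j`
  set A := (Matrix.of fun y z : ZMod n => p.coeff (z - y).val).submatrix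
    (fun k : Fin (n - d) => (k : ZMod n)) (fun j : Fin (n - d) => ((d + j : ℕ) : ZMod n))
  have hentry : ∀ k j : Fin (n - d), k ≤ j → A k j = p.coeff (d + (j - k)) := by
    intro k j hkj
    have hle : (k : ℕ) ≤ d + j := by omega
    simp only [A, Matrix.submatrix_apply, Matrix.of_apply]
    rw [← Nat.cast_sub hle, ZMod.val_cast_of_lt (by omega)]
    congr 1
    omega
  have hlower : A.IsLowerTriangular := fun k j hkj => by
    rw [hentry k j (le_of_lt hkj)]
    exact coeff_eq_zero_of_natDegree_lt (by simp at hkj; omega)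
  have hdet : IsUnit A.det := by
    rw [Matrix.det_of_isLowerTriangular A hlower, isUnit_iff_ne_zero,
      Finset.prod_ne_zero_iff]
    intro k _
    rw [hentry k k le_rfl, Nat.sub_self, add_zero]
    exact leadingCoeff_ne_zero.mpr hp
  calc n - d = A.rank := by
        rw [Matrix.rank_of_isUnit A ((Matrix.isUnit_iff_isUnit_det A).mpr hdet), Fintype.card_fin]
    _ ≤ _ := Matrix.rank_submatrix_le _ _ _

theorem le_of_hasSliceRankLE_addTensor_zmod {n r : ℕ} [NeZero n]
    (h : HasSliceRankLE K (addTensor K (ZMod n)) r) : n ≤ r := by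
  by_contra! hrn
  obtain ⟨S, f, hS⟩ := h.exists_rank_contract_le
  obtain ⟨p, hp, hpdeg, hpf⟩ := exists_ne_zero_degree_lt_forall_eq_zero
    (fun i : S => ∑ x : ZMod n, f i x • lcoeff K x.val) (m := n - #Sᶜ)
    (by have := S.card_add_card_compl; rw [Fintype.card_fin] at this; rw [Fintype.card_coe]; omega)
  have hrank := hS (fun x => p.coeff x.val) fun i hi => by
    simpa [mul_comm] using hpf ⟨i, hi⟩
  simp only [sum_mul_addTensor] at hrank
  have hdeg : p.natDegree < n - #Sᶜ := (natDegree_lt_iff_degree_lt hp).mpr hpdeg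
  have := Polynomial.sub_natDegree_le_rank_coeff_sub (n := n) hp (by omega)
  omega

end

/-- For any cyclic group `Z/nZ` (`n ≥ 1`, written additively) and any field
`F`, the slice rank of the multiplication tensor of the group equals `n`. -/
theorem sliceRank_cyclic {K : Type*} [Field K] (n : ℕ) [NeZero n] :
    sliceRank K (fun g h k : ZMod n => if g + h = k then (1 : K) else 0) = n := by
  have hn : HasSliceRankLE K (addTensor K (ZMod n)) n := by
    simpa using hasSliceRankLE_addTensor (K := K) (G := ZMod n)
  exact le_antisymm (Nat.sInf_le hn)
    (le_csInf ⟨n, hn⟩ fun _ => le_of_hasSliceRankLE_addTensor_zmod)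
end
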